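/- arXiv:1210.2389 — 5 statements merged into one kernel-verified Lean document; each statement's English description precedes it below -/
import Mathlib

section
/- Let m ≥ 1 be an integer. For every Schwartz function φ on ℝ^{1+m}, the function X ↦ ⟨X, ∇φ(X)⟩/|X|^{m+1} is integrable on ℝ^{1+m} and -(1/σ_{m+1}) ∫_{ℝ^{1+m}} ⟨X, ∇φ(X)⟩ / |X|^{m+1} dX = φ(0). (This expresses distributionally that the Cauchy kernel C_{-1}(x) = (1/σ_{m+1}) x ē₀/|x|^{m+1} is the fundamental solution of the generalized Cauchy–Riemann operator: it is the scalar part of the identity D C_{-1} = δ, equivalently div(X/|X|^{m+1}) = σ_{m+1} δ in ℝ^{m+1}.) -/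
open MeasureTheory Metric Set InnerProductSpace
open scoped ENNReal NNReal

/-- The area of the unit sphere `S^{n-1}` in `ℝ^n`: `σ_n = 2 π^{n/2} / Γ(n/2)`. -/
noncomputable def sphereArea (n : ℕ) : ℝ :=
  2 * Real.pi ^ ((n : ℝ) / 2) / Real.Gamma ((n : ℝ) / 2)

namespace CauchyAux

variable {d : ℕ}

local notation "E" => EuclideanSpace ℝ (Fin d)

variable (φ : SchwartzMap (EuclideanSpace ℝ (Fin d)) ℝ)

lemma grad_cont : Continuous fun x : E => gradient (⇑φ) x := by
  unfold gradient
  exact (toDual ℝ _).symm.continuous.comp ((φ.smooth ⊤).continuous_fderiv (by simp))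

lemma inner_grad (x v : E) : (inner ℝ (gradient (⇑φ) x) v : ℝ) = fderiv ℝ (⇑φ) x v := by
  unfold gradient
  rw [← toDual_apply_apply, LinearIsometryEquiv.apply_symm_apply]

lemma grad_norm (x : E) : ‖gradient (⇑φ) x‖ = ‖fderiv ℝ (⇑φ) x‖ := by
  unfold gradient; exact LinearIsometryEquiv.norm_map _ _

lemma grad_decay : ∃ C : ℝ, 0 < C ∧ ∀ x : E, ‖gradient (⇑φ) x‖ ≤ C / (1 + ‖x‖ ^ 2) := by
  obtain ⟨C₀, hC₀, h₀⟩ := (SchwartzMap.fderivCLM ℝ _ _ φ).decay 0 0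
  obtain ⟨C₂, hC₂, h₂⟩ := (SchwartzMap.fderivCLM ℝ _ _ φ).decay 2 0
  refine ⟨C₀ + C₂, by positivity, fun x => ?_⟩
  have h0 := h₀ x; have h2 := h₂ x
  simp only [pow_zero, one_mul, norm_iteratedFDeriv_zero, SchwartzMap.fderivCLM_apply] at h0 h2
  rw [grad_norm, le_div_iff₀ (by positivity)]
  nlinarith [norm_nonneg (fderiv ℝ (⇑φ) x), sq_nonneg ‖x‖]

lemma radial_bound {C : ℝ} (hb : ∀ x : E, ‖gradient (⇑φ) x‖ ≤ C / (1 + ‖x‖ ^ 2))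
    {ω : E} (hω : ‖ω‖ = 1) {r : ℝ} (hr : 0 < r) :
    ‖(inner ℝ ω (gradient (⇑φ) (r • ω)) : ℝ)‖ ≤ C * (1 + r ^ 2)⁻¹ := by
  have h1 : ‖r • ω‖ = r := by
    rw [norm_smul, hω, Real.norm_eq_abs, abs_of_pos hr, mul_one]
  calc ‖(inner ℝ ω (gradient (⇑φ) (r • ω)) : ℝ)‖
      ≤ ‖ω‖ * ‖gradient (⇑φ) (r • ω)‖ := norm_inner_le_norm _ _
    _ = ‖gradient (⇑φ) (r • ω)‖ := by rw [hω, one_mul]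
    _ ≤ C / (1 + ‖r • ω‖ ^ 2) := hb _
    _ = C * (1 + r ^ 2)⁻¹ := by rw [h1, div_eq_mul_inv]

lemma radial_cont (ω : E) : Continuous fun r : ℝ => (inner ℝ ω (gradient (⇑φ) (r • ω)) : ℝ) :=
  continuous_const.inner ((grad_cont φ).comp (continuous_id.smul continuous_const))

lemma radial_integrableOn {C : ℝ} (hb : ∀ x : E, ‖gradient (⇑φ) x‖ ≤ C / (1 + ‖x‖ ^ 2))
    {ω : E} (hω : ‖ω‖ = 1) :
    IntegrableOn (fun r : ℝ => (inner ℝ ω (gradient (⇑φ) (r • ω)) : ℝ)) (Ioi 0) := by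
  refine Integrable.mono' ((integrable_inv_one_add_sq.const_mul C).integrableOn)
    (radial_cont φ ω).aestronglyMeasurable.restrict ?_
  filter_upwards [ae_restrict_mem measurableSet_Ioi] with r hr
  exact radial_bound φ hb hω hr

lemma radial_integral {ω : E} (hω : ‖ω‖ = 1) :
    ∫ r in Ioi (0:ℝ), (inner ℝ ω (gradient (⇑φ) (r • ω)) : ℝ) = -φ 0 := by
  obtain ⟨C, hC, hb⟩ := grad_decay φ
  have hder : ∀ r ∈ Ici (0:ℝ), HasDerivAt (fun s : ℝ => φ (s • ω))
      ((inner ℝ ω (gradient (⇑φ) (r • ω)) : ℝ)) r := by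
    intro r _
    have h1 : HasFDerivAt (⇑φ) (fderiv ℝ (⇑φ) (r • ω)) (r • ω) :=
      (φ.differentiable.differentiableAt).hasFDerivAt
    have h2 : HasDerivAt (fun s : ℝ => s • ω) ω r := by
      simpa using (hasDerivAt_id r).smul_const ω
    have h3 := h1.comp_hasDerivAt r h2
    rw [real_inner_comm, inner_grad]
    exact h3
  have htend : Filter.Tendsto (fun r : ℝ => φ (r • ω)) Filter.atTop (nhds 0) := by
    obtain ⟨C', hC', hb'⟩ := φ.decay 1 0
    simp only [pow_one, norm_iteratedFDeriv_zero] at hb'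
    refine squeeze_zero_norm' (a := fun r : ℝ => C' / r) ?_ (tendsto_const_nhds.div_atTop Filter.tendsto_id)
    filter_upwards [Filter.eventually_gt_atTop (0:ℝ)] with r hr
    have h1 : ‖r • ω‖ = r := by
      rw [norm_smul, hω, Real.norm_eq_abs, abs_of_pos hr, mul_one]
    have h2 := hb' (r • ω)
    rw [h1] at h2
    rw [le_div_iff₀ hr]
    linarith [h2]
  have key := integral_Ioi_of_hasDerivAt_of_tendsto' hder (radial_integrableOn φ hb hω) htend
  simpa using key

end CauchyAux


theorem sphereArea_pos (m : ℕ) : 0 < sphereArea (m + 1) := by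
  unfold sphereArea
  have h1 : 0 < Real.Gamma (((m + 1 : ℕ) : ℝ) / 2) :=
    Real.Gamma_pos_of_pos (by positivity)
  have h2 : 0 < Real.pi ^ (((m + 1 : ℕ) : ℝ) / 2) := Real.rpow_pos_of_pos Real.pi_pos _
  positivity

theorem sphereArea_eq (m : ℕ) :
    ((volume : Measure (EuclideanSpace ℝ (Fin (1 + m)))).toSphere univ).toReal
      = sphereArea (m + 1) := by
  haveI : Nonempty (Fin (1 + m)) := ⟨⟨0, by omega⟩⟩
  have hΓpos : 0 < Real.Gamma (((m : ℝ) + 1) / 2) :=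
    Real.Gamma_pos_of_pos (by positivity)
  have harg : ((Fintype.card (Fin (1 + m)) : ℝ)) / 2 = ((m : ℝ) + 1) / 2 := by
    simp [Fintype.card_fin]; push_cast; ring
  have hnonneg : (0:ℝ) ≤ Real.sqrt Real.pi ^ Fintype.card (Fin (1 + m)) /
      Real.Gamma ((Fintype.card (Fin (1 + m)) : ℝ) / 2 + 1) := by
    apply div_nonneg (pow_nonneg (Real.sqrt_nonneg _) _)
    rw [harg]
    exact (Real.Gamma_pos_of_pos (by positivity)).le
  rw [Measure.toSphere_apply_univ, EuclideanSpace.volume_ball]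
  rw [ENNReal.ofReal_one, one_pow, one_mul, ENNReal.toReal_mul, ENNReal.toReal_natCast,
    ENNReal.toReal_ofReal hnonneg, harg]
  have hπ : Real.sqrt Real.pi ^ Fintype.card (Fin (1 + m)) = Real.pi ^ (((m:ℝ) + 1) / 2) := by
    rw [Fintype.card_fin, Real.sqrt_eq_rpow,
      ← Real.rpow_natCast (Real.pi ^ ((1:ℝ)/2 : ℝ)) (1 + m), ← Real.rpow_mul Real.pi_pos.le]
    congr 1
    push_cast; ring
  have hΓrec : Real.Gamma (((m:ℝ) + 1) / 2 + 1) = (((m:ℝ) + 1) / 2) * Real.Gamma (((m:ℝ)+1)/2) :=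
    Real.Gamma_add_one (by positivity)
  rw [hπ, hΓrec, finrank_euclideanSpace_fin]
  unfold sphereArea
  push_cast
  field_simp
  ring


theorem cauchy_kernel_fundamental_solution
    (m : ℕ) (hm : 1 ≤ m) (φ : SchwartzMap (EuclideanSpace ℝ (Fin (1 + m))) ℝ) :
    Integrable (fun X : EuclideanSpace ℝ (Fin (1 + m)) =>
      (inner ℝ X (gradient (fun Y => φ Y) X) : ℝ) / ‖X‖ ^ (m + 1)) ∧
    -(1 / sphereArea (m + 1)) *
        ∫ X : EuclideanSpace ℝ (Fin (1 + m)),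
          (inner ℝ X (gradient (fun Y => φ Y) X) : ℝ) / ‖X‖ ^ (m + 1) = φ 0 := by
  classical
  haveI : Nonempty (Fin (1 + m)) := ⟨⟨0, by omega⟩⟩
  haveI : Nontrivial (EuclideanSpace ℝ (Fin (1 + m))) := inferInstance
  set f : EuclideanSpace ℝ (Fin (1 + m)) → ℝ := fun X =>
    (inner ℝ X (gradient (fun Y => φ Y) X) : ℝ) / ‖X‖ ^ (m + 1) with hf_def
  obtain ⟨C, hC, hb⟩ := CauchyAux.grad_decay φ
  set K : ℝ := ∫ r in Ioi (0:ℝ), C * (1 + r ^ 2)⁻¹ with hK_def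
  have hKint : IntegrableOn (fun r : ℝ => C * (1 + r ^ 2)⁻¹) (Ioi 0) :=
    (integrable_inv_one_add_sq.const_mul C).integrableOn
  set g : sphere (0 : EuclideanSpace ℝ (Fin (1 + m))) 1 → ℝ → ℝ := fun ω r =>
    (inner ℝ (ω : EuclideanSpace ℝ (Fin (1 + m))) (gradient (⇑φ)
      (r • (ω : EuclideanSpace ℝ (Fin (1 + m))))) : ℝ) with hg_def
  set G : sphere (0 : EuclideanSpace ℝ (Fin (1 + m))) 1 × Ioi (0:ℝ) → ℝ :=
    fun p => f ((p.2 : ℝ) • (p.1 : EuclideanSpace ℝ (Fin (1 + m)))) with hG_def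
  -- measurability
  have hfm : Measurable f := by
    apply Measurable.div
    · exact (continuous_id.inner (CauchyAux.grad_cont φ)).measurable
    · exact (continuous_norm.pow (m + 1)).measurable
  have hGm : Measurable G :=
    hfm.comp (((continuous_subtype_val.comp continuous_snd).smul
      (continuous_subtype_val.comp continuous_fst)).measurable)
  -- the density representation of volumeIoiPow
  have hρ : (Measure.volumeIoiPow m)
      = (volume.comap (Subtype.val : Ioi (0:ℝ) → ℝ)).withDensity
        (fun r => ((Real.toNNReal ((r:ℝ) ^ m) : ℝ≥0) : ℝ≥0∞)) := rfl
  have hmeasρ : Measurable fun r : Ioi (0:ℝ) => Real.toNNReal ((r:ℝ) ^ m) :=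
    (measurable_subtype_coe.pow_const m).real_toNNReal
  have hemb : MeasurableEmbedding (Subtype.val : Ioi (0:ℝ) → ℝ) :=
    MeasurableEmbedding.subtype_coe measurableSet_Ioi
  have hmapIoi : Measure.map Subtype.val (volume.comap (Subtype.val : Ioi (0:ℝ) → ℝ))
      = volume.restrict (Ioi 0) := map_comap_subtype_coe measurableSet_Ioi _
  -- sections
  have hsec : ∀ ω : sphere (0 : EuclideanSpace ℝ (Fin (1 + m))) 1,
      Integrable (fun r : Ioi (0:ℝ) => G (ω, r)) (Measure.volumeIoiPow m)
      ∧ ∫ r : Ioi (0:ℝ), G (ω, r) ∂(Measure.volumeIoiPow m) = -φ 0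
      ∧ ∫ r : Ioi (0:ℝ), ‖G (ω, r)‖ ∂(Measure.volumeIoiPow m) ≤ K := by
    intro ω
    have hω : ‖(ω : EuclideanSpace ℝ (Fin (1 + m)))‖ = 1 := mem_sphere_zero_iff_norm.mp ω.2
    have hkey : ∀ r : Ioi (0:ℝ), (Real.toNNReal ((r:ℝ) ^ m)) • G (ω, r) = g ω (r:ℝ) := by
      intro r
      have hr : (0:ℝ) < r := r.2
      have hnorm : ‖(r:ℝ) • (ω : EuclideanSpace ℝ (Fin (1 + m)))‖ = (r:ℝ) := by
        rw [norm_smul, hω, Real.norm_eq_abs, abs_of_pos hr, mul_one]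
      have h1 : G (ω, r) = ((r:ℝ) * g ω r) / (r:ℝ) ^ (m + 1) := by
        simp only [hG_def, hf_def, real_inner_smul_left, hnorm, hg_def]
      rw [h1, NNReal.smul_def, Real.coe_toNNReal _ (pow_nonneg hr.le m), smul_eq_mul]
      rw [pow_succ]
      field_simp
    have hkeyn : ∀ r : Ioi (0:ℝ), (Real.toNNReal ((r:ℝ) ^ m)) • ‖G (ω, r)‖ = ‖g ω (r:ℝ)‖ := by
      intro r
      have hc : (0:ℝ) ≤ (r:ℝ) ^ m := pow_nonneg r.2.out.le m
      rw [← hkey r]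
      simp only [NNReal.smul_def, Real.coe_toNNReal _ hc, smul_eq_mul, norm_mul,
        Real.norm_of_nonneg hc]
    have hInt : Integrable (fun r : Ioi (0:ℝ) => G (ω, r)) (Measure.volumeIoiPow m) := by
      rw [hρ, integrable_withDensity_iff_integrable_smul hmeasρ]
      rw [show (fun r : Ioi (0:ℝ) => Real.toNNReal ((r:ℝ) ^ m) • G (ω, r))
          = (fun r : ℝ => g ω r) ∘ (Subtype.val : Ioi (0:ℝ) → ℝ) from funext hkey]
      rw [← hemb.integrable_map_iff, hmapIoi]
      exact CauchyAux.radial_integrableOn φ hb hω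
    refine ⟨hInt, ?_, ?_⟩
    · rw [hρ, integral_withDensity_eq_integral_smul hmeasρ]
      rw [show (fun r : Ioi (0:ℝ) => Real.toNNReal ((r:ℝ) ^ m) • G (ω, r))
          = (fun r : Ioi (0:ℝ) => g ω (r:ℝ)) from funext hkey]
      rw [integral_subtype_comap measurableSet_Ioi (fun r : ℝ => g ω r)]
      exact CauchyAux.radial_integral φ hω
    · have heq : ∫ r : Ioi (0:ℝ), ‖G (ω, r)‖ ∂(Measure.volumeIoiPow m)
          = ∫ r in Ioi (0:ℝ), ‖g ω r‖ := by
        rw [hρ, integral_withDensity_eq_integral_smul hmeasρ]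
        rw [show (fun r : Ioi (0:ℝ) => Real.toNNReal ((r:ℝ) ^ m) • ‖G (ω, r)‖)
            = (fun r : Ioi (0:ℝ) => ‖g ω (r:ℝ)‖) from funext hkeyn]
        exact integral_subtype_comap measurableSet_Ioi (fun r : ℝ => ‖g ω r‖)
      rw [heq, hK_def]
      refine setIntegral_mono_on ((CauchyAux.radial_integrableOn φ hb hω).norm) hKint measurableSet_Ioi ?_
      intro r hr
      exact CauchyAux.radial_bound φ hb hω hr
  -- measure-preserving polar decomposition
  have H := (volume : Measure (EuclideanSpace ℝ (Fin (1 + m)))).measurePreserving_homeomorphUnitSphereProd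
  have hd1 : Module.finrank ℝ (EuclideanSpace ℝ (Fin (1 + m))) - 1 = m := by
    simp [finrank_euclideanSpace_fin]
  rw [hd1] at H
  have hGaesm : AEStronglyMeasurable G
      ((volume : Measure (EuclideanSpace ℝ (Fin (1 + m)))).toSphere.prod (Measure.volumeIoiPow m)) :=
    hGm.aestronglyMeasurable
  have hGint : Integrable G
      ((volume : Measure (EuclideanSpace ℝ (Fin (1 + m)))).toSphere.prod (Measure.volumeIoiPow m)) := by
    rw [integrable_prod_iff hGaesm]
    refine ⟨Filter.Eventually.of_forall fun ω => (hsec ω).1, ?_⟩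
    refine Integrable.mono' (integrable_const K) hGaesm.norm.integral_prod_right'
      (Filter.Eventually.of_forall fun ω => ?_)
    rw [Real.norm_eq_abs, abs_of_nonneg (integral_nonneg fun r => norm_nonneg _)]
    exact (hsec ω).2.2
  have hemb0 : MeasurableEmbedding
      (Subtype.val : ({0}ᶜ : Set (EuclideanSpace ℝ (Fin (1 + m)))) → EuclideanSpace ℝ (Fin (1 + m))) :=
    MeasurableEmbedding.subtype_coe (measurableSet_singleton 0).compl
  have hmap0 : Measure.map Subtype.val
      (volume.comap (Subtype.val : ({0}ᶜ : Set (EuclideanSpace ℝ (Fin (1 + m)))) → EuclideanSpace ℝ (Fin (1 + m))))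
      = volume.restrict {(0 : EuclideanSpace ℝ (Fin (1 + m)))}ᶜ :=
    map_comap_subtype_coe (measurableSet_singleton 0).compl _
  have hfcoe : f ∘ (Subtype.val : ({0}ᶜ : Set (EuclideanSpace ℝ (Fin (1 + m)))) → EuclideanSpace ℝ (Fin (1 + m)))
      = G ∘ (homeomorphUnitSphereProd (EuclideanSpace ℝ (Fin (1 + m)))) := by
    funext x
    have hx : ‖(x : EuclideanSpace ℝ (Fin (1 + m)))‖ ≠ 0 := norm_ne_zero_iff.mpr x.2
    simp only [Function.comp_apply, hG_def, homeomorphUnitSphereProd_apply_fst_coe,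
      homeomorphUnitSphereProd_apply_snd_coe, smul_smul, mul_inv_cancel₀ hx, one_smul]
  have hIntf : Integrable f := by
    have h1 : Integrable (G ∘ (homeomorphUnitSphereProd (EuclideanSpace ℝ (Fin (1 + m)))))
        (volume.comap Subtype.val) :=
      (H.integrable_comp_emb (Homeomorph.measurableEmbedding _)).mpr hGint
    rw [← hfcoe] at h1
    rw [← hemb0.integrable_map_iff, hmap0, restrict_compl_singleton] at h1
    exact h1
  have hval : ∫ X : EuclideanSpace ℝ (Fin (1 + m)), f X
      = ((volume : Measure (EuclideanSpace ℝ (Fin (1 + m)))).toSphere univ).toReal * (-φ 0) := by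
    have e1 : ∫ X : EuclideanSpace ℝ (Fin (1 + m)), f X
        = ∫ x : ({0}ᶜ : Set (EuclideanSpace ℝ (Fin (1 + m)))), f x ∂(volume.comap Subtype.val) := by
      rw [integral_subtype_comap (measurableSet_singleton 0).compl f,
        restrict_compl_singleton]
    calc ∫ X : EuclideanSpace ℝ (Fin (1 + m)), f X
        = ∫ x : ({0}ᶜ : Set (EuclideanSpace ℝ (Fin (1 + m)))), f ↑x ∂(volume.comap Subtype.val) := by
          rw [integral_subtype_comap (measurableSet_singleton 0).compl f,
            restrict_compl_singleton]
      _ = ∫ x : ({0}ᶜ : Set (EuclideanSpace ℝ (Fin (1 + m)))),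
            G (homeomorphUnitSphereProd (EuclideanSpace ℝ (Fin (1 + m))) x)
            ∂(volume.comap Subtype.val) :=
          integral_congr_ae (Filter.Eventually.of_forall fun x => congrFun hfcoe x)
      _ = ∫ p, G p ∂(volume.toSphere.prod (Measure.volumeIoiPow m)) :=
          H.integral_comp (Homeomorph.measurableEmbedding _) G
      _ = ∫ ω, (∫ r : Ioi (0:ℝ), G (ω, r) ∂(Measure.volumeIoiPow m)) ∂volume.toSphere :=
          integral_prod G hGint
      _ = ∫ _ω : sphere (0 : EuclideanSpace ℝ (Fin (1 + m))) 1, (-φ 0) ∂volume.toSphere :=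
          integral_congr_ae (Filter.Eventually.of_forall fun ω => (hsec ω).2.1)
      _ = ((volume : Measure (EuclideanSpace ℝ (Fin (1 + m)))).toSphere univ).toReal * (-φ 0) := by
          rw [integral_const, smul_eq_mul, measureReal_def]
  refine ⟨hIntf, ?_⟩
  rw [hval, sphereArea_eq m]
  have hS : sphereArea (m + 1) ≠ 0 := (sphereArea_pos m).ne'
  field_simp
end

section
/- Let m ≥ 1 be an integer and define, for t > 0 and x ∈ ℝ^m with x ≠ 0, B_{0,j}(t,x) = (2/σ_{m+1}) (x_j/|x|^m) F_m(|x|/t), where F_m(v) = ∫_0^v η^{m-1}(1+η²)^{-(m+1)/2} dη. Then on {(t,x) : t > 0, x ≠ 0}: (a) ∂_t B_{0,j}(t,x) = Q_j(t,x) for each j; (b) Σ_{j=1}^m ∂_{x_j} B_{0,j}(t,x) = P(t,x); (c) ∂_{x_i} B_{0,j} = ∂_{x_j} B_{0,i} for all i, j; where P(t,x) = (2/σ_{m+1}) t (t²+|x|²)^{-(m+1)/2} and Q_j(t,x) = -(2/σ_{m+1}) x_j (t²+|x|²)^{-(m+1)/2}. (This is the componentwise form of the relation D̄(ē₀ B_0)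 = C_{-1}: B_0 is the conjugate harmonic potential of A_0 and a primitive of the Cauchy kernel.) -/
open MeasureTheory

/-- `F_k(v) = ∫_0^v η^{k-1} (1+η²)^{-(k+1)/2} dη`. -/
noncomputable def Fpot (k : ℕ) (v : ℝ) : ℝ :=
  ∫ η in (0:ℝ)..v, η ^ (k - 1) / (1 + η ^ 2) ^ (((k : ℝ) + 1) / 2)

/-- The Poisson kernel `P(t,x) = (2/σ_{m+1}) t (t²+|x|²)^{-(m+1)/2}`. -/
noncomputable def poissonP (m : ℕ) (t : ℝ) (x : EuclideanSpace ℝ (Fin m)) : ℝ :=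
  2 / sphereArea (m + 1) * t * (t ^ 2 + ‖x‖ ^ 2) ^ (-(((m : ℝ) + 1) / 2))

/-- The conjugate Poisson kernel components
`Q_j(t,x) = -(2/σ_{m+1}) x_j (t²+|x|²)^{-(m+1)/2}`. -/
noncomputable def poissonQ (m : ℕ) (j : Fin m) (t : ℝ) (x : EuclideanSpace ℝ (Fin m)) : ℝ :=
  -(2 / sphereArea (m + 1)) * x j * (t ^ 2 + ‖x‖ ^ 2) ^ (-(((m : ℝ) + 1) / 2))

/-- The components `B_{0,j}(t,x) = (2/σ_{m+1}) (x_j/|x|^m) F_m(|x|/t)` of the conjugate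
harmonic potential `B_0`. -/
noncomputable def potB0 (m : ℕ) (j : Fin m) (t : ℝ) (x : EuclideanSpace ℝ (Fin m)) : ℝ :=
  2 / sphereArea (m + 1) * (x j / ‖x‖ ^ m) * Fpot m (‖x‖ / t)

/- ## Auxiliary lemmas -/

lemma hasDerivAt_Fpot (m : ℕ) (v : ℝ) :
    HasDerivAt (Fpot m) (v ^ (m-1) / (1 + v ^ 2) ^ (((m:ℝ)+1)/2)) v := by
  have hc : Continuous (fun η : ℝ => η ^ (m-1) / (1 + η ^ 2) ^ (((m:ℝ)+1)/2)) := by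
    apply Continuous.div (continuous_pow _)
    · exact (continuous_const.add (continuous_pow 2)).rpow_const (fun x => Or.inr (by positivity))
    · intro y; positivity
  exact intervalIntegral.integral_hasDerivAt_right (hc.intervalIntegrable _ _)
    (hc.stronglyMeasurable.stronglyMeasurableAtFilter) hc.continuousAt

lemma norm_dir (m : ℕ) (x : EuclideanSpace ℝ (Fin m)) (i : Fin m) (s : ℝ) :
    ‖x + s • EuclideanSpace.single i (1:ℝ)‖ = Real.sqrt (‖x‖^2 + 2*(x i)*s + s^2) := by
  rw [show ‖x‖^2 + 2*(x i)*s + s^2 = ‖x + s • EuclideanSpace.single i (1:ℝ)‖^2 by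
    rw [norm_add_sq_real]
    simp [real_inner_smul_right, EuclideanSpace.inner_single_right, norm_smul]
    ring]
  exact (Real.sqrt_sq (norm_nonneg _)).symm

lemma hasDerivAt_norm_dir (m : ℕ) (x : EuclideanSpace ℝ (Fin m)) (hx : x ≠ 0) (i : Fin m) :
    HasDerivAt (fun s : ℝ => ‖x + s • EuclideanSpace.single i (1:ℝ)‖) (x i / ‖x‖) 0 := by
  have hr : (0:ℝ) < ‖x‖ := by
    have : ‖x‖ ≠ 0 := fun h => hx (norm_eq_zero.mp h)
    exact lt_of_le_of_ne (norm_nonneg x) (Ne.symm this)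
  have hh : HasDerivAt (fun s : ℝ => ‖x‖^2 + 2*(x i)*s + s^2) (2 * x i) 0 := by
    have := ((hasDerivAt_id (0:ℝ)).const_mul (2*(x i))).const_add (‖x‖^2)
    have h2 := (hasDerivAt_pow 2 (0:ℝ))
    simpa using this.fun_add h2
  have hs : HasDerivAt Real.sqrt (1 / (2 * Real.sqrt (‖x‖^2 + 2*(x i)*0 + 0^2)))
      (‖x‖^2 + 2*(x i)*0 + 0^2) := by
    apply Real.hasDerivAt_sqrt
    have : ‖x‖^2 + 2*(x i)*0 + 0^2 = ‖x‖^2 := by ring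
    rw [this]
    positivity
  have := hs.comp 0 hh
  simp only [norm_dir]
  refine this.congr_deriv ?_
  simp [Real.sqrt_sq hr.le]
  field_simp

/-- key rpow identity -/
lemma key_rpow (k : ℕ) (t r : ℝ) (ht : 0 < t) :
    (1 + (r/t)^2) ^ (((k:ℝ)+1+1)/2) = (t^2 + r^2) ^ (((k:ℝ)+1+1)/2) / t ^ (k+2) := by
  have h1 : 1 + (r/t)^2 = (t^2+r^2)/t^2 := by field_simp
  rw [h1, Real.div_rpow (by positivity) (by positivity)]
  congr 1
  rw [← Real.rpow_natCast t 2, ← Real.rpow_mul ht.le]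
  rw [show ((2:ℕ):ℝ) * (((k:ℝ)+1+1)/2) = ((k+2 : ℕ):ℝ) by push_cast; ring]
  rw [Real.rpow_natCast]

/-- Directional derivative of `potB0` in coordinate direction `i`. -/
lemma hasDerivAt_potB0_dir (k : ℕ) (t : ℝ) (ht : 0 < t)
    (x : EuclideanSpace ℝ (Fin (k+1))) (hx : x ≠ 0) (i j : Fin (k+1)) :
    HasDerivAt (fun s : ℝ => potB0 (k+1) j t (x + s • EuclideanSpace.single i (1:ℝ)))
      (2 / sphereArea (k+1+1) *
        ( ((if j = i then (1:ℝ) else 0) * ‖x‖^(k+1)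
              - x j * (((k:ℝ)+1) * ‖x‖^k * (x i / ‖x‖))) / (‖x‖^(k+1))^2
            * Fpot (k+1) (‖x‖/t)
          + x j / ‖x‖^(k+1)
            * ((‖x‖/t)^k / (1 + (‖x‖/t)^2) ^ ((((k+1:ℕ):ℝ)+1)/2) * (x i / ‖x‖ / t)))) 0 := by
  have hr : (0:ℝ) < ‖x‖ := by
    have : ‖x‖ ≠ 0 := fun h => hx (norm_eq_zero.mp h)
    exact lt_of_le_of_ne (norm_nonneg x) (Ne.symm this)
  have hN := hasDerivAt_norm_dir (k+1) x hx i
  have h0 : ‖x + (0:ℝ) • EuclideanSpace.single i (1:ℝ)‖ = ‖x‖ := by simp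
  -- numerator component
  have hA : HasDerivAt (fun s : ℝ => (x + s • EuclideanSpace.single i (1:ℝ)) j)
      (if j = i then (1:ℝ) else 0) 0 := by
    have heq : (fun s : ℝ => (x + s • EuclideanSpace.single i (1:ℝ)) j)
        = fun s : ℝ => x j + s * (if j = i then (1:ℝ) else 0) := by
      funext s
      simp [EuclideanSpace.single_apply]
    rw [heq]
    by_cases h : j = i
    · simp only [if_pos h, mul_one]
      simpa using (hasDerivAt_id (0:ℝ)).const_add (x j)
    · simp only [if_neg h, mul_zero, add_zero]
      exact hasDerivAt_const _ _
  -- denominator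
  have hB : HasDerivAt (fun s : ℝ => ‖x + s • EuclideanSpace.single i (1:ℝ)‖ ^ (k+1))
      (((k:ℝ)+1) * ‖x‖^k * (x i / ‖x‖)) 0 := by
    have := hN.fun_pow (k+1)
    simpa [h0] using this
  have hBne : ‖x + (0:ℝ) • EuclideanSpace.single i (1:ℝ)‖ ^ (k+1) ≠ 0 := by
    rw [h0]; positivity
  -- F part
  have hF : HasDerivAt
      (fun s : ℝ => Fpot (k+1) (‖x + s • EuclideanSpace.single i (1:ℝ)‖ / t))
      ((‖x‖/t)^k / (1 + (‖x‖/t)^2) ^ ((((k+1:ℕ):ℝ)+1)/2) * (x i / ‖x‖ / t)) 0 := by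
    have hq := hN.div_const t
    have := (hasDerivAt_Fpot (k+1) (‖x + (0:ℝ) • EuclideanSpace.single i (1:ℝ)‖ / t)).comp 0 hq
    simpa [h0, Function.comp_def] using this
  have := ((hA.fun_div hB hBne).fun_mul hF).const_mul (2 / sphereArea (k+1+1))
  convert this using 1
  · rfl
  · rfl
  · funext s
    simp only [potB0]
    ring
  · simp only [h0, zero_smul, add_zero]

/-- Closed form of the directional derivative as stated via `deriv`. -/
lemma deriv_potB0_dir (k : ℕ) (t : ℝ) (ht : 0 < t)
    (x : EuclideanSpace ℝ (Fin (k+1))) (hx : x ≠ 0) (i j : Fin (k+1)) :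
    deriv (fun s : ℝ => potB0 (k+1) j t (x + s • EuclideanSpace.single i (1:ℝ))) 0
      = 2 / sphereArea (k+1+1) *
        ( ((if j = i then (1:ℝ) else 0) * ‖x‖^(k+1)
              - x j * (((k:ℝ)+1) * ‖x‖^k * (x i / ‖x‖))) / (‖x‖^(k+1))^2
            * Fpot (k+1) (‖x‖/t)
          + x j / ‖x‖^(k+1)
            * ((‖x‖/t)^k / (1 + (‖x‖/t)^2) ^ ((((k+1:ℕ):ℝ)+1)/2) * (x i / ‖x‖ / t))) :=
  (hasDerivAt_potB0_dir k t ht x hx i j).deriv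

theorem B0_primitive_of_cauchy_kernel
    (m : ℕ) (hm : 1 ≤ m) (t : ℝ) (ht : 0 < t) (x : EuclideanSpace ℝ (Fin m)) (hx : x ≠ 0) :
    (∀ j : Fin m, deriv (fun s => potB0 m j s x) t = poissonQ m j t x) ∧
    (∑ j : Fin m,
        deriv (fun s : ℝ => potB0 m j t (x + s • EuclideanSpace.single j (1 : ℝ))) 0 =
      poissonP m t x) ∧
    (∀ i j : Fin m,
      deriv (fun s : ℝ => potB0 m j t (x + s • EuclideanSpace.single i (1 : ℝ))) 0 =
        deriv (fun s : ℝ => potB0 m i t (x + s • EuclideanSpace.single j (1 : ℝ))) 0) := by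
  obtain ⟨k, rfl⟩ : ∃ k, m = k + 1 := ⟨m - 1, (Nat.succ_pred_eq_of_pos hm).symm⟩
  have hr : (0:ℝ) < ‖x‖ := by
    have : ‖x‖ ≠ 0 := fun h => hx (norm_eq_zero.mp h)
    exact lt_of_le_of_ne (norm_nonneg x) (Ne.symm this)
  set r := ‖x‖ with hrdef
  set C := 2 / sphereArea (k+1+1) with hC
  have hAp : (0:ℝ) < (t^2 + r^2) ^ ((((k+1:ℕ):ℝ)+1)/2) := by positivity
  have hkey : (1 + (r/t)^2) ^ ((((k+1:ℕ):ℝ)+1)/2)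
      = (t^2 + r^2) ^ ((((k+1:ℕ):ℝ)+1)/2) / t ^ (k+2) := by
    have := key_rpow k t r ht
    rw [show ((((k+1:ℕ):ℝ))+1)/2 = (((k:ℝ)+1+1)/2) by push_cast; ring]
    exact this
  have hneg : (t^2 + r^2) ^ (-((((k+1:ℕ):ℝ)+1)/2))
      = ((t^2 + r^2) ^ ((((k+1:ℕ):ℝ)+1)/2))⁻¹ := by
    rw [← Real.rpow_neg (by positivity)]
  refine ⟨?_, ?_, ?_⟩
  · -- part (a)
    intro j
    have hinv : HasDerivAt (fun s : ℝ => r / s) (r * -(t^2)⁻¹) t := by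
      have := (hasDerivAt_inv ht.ne').const_mul r
      simpa [div_eq_mul_inv] using this
    have hF := (hasDerivAt_Fpot (k+1) (r / t)).comp t hinv
    have hF' : HasDerivAt (fun s : ℝ => Fpot (k+1) (r / s))
        ((r / t) ^ (k + 1 - 1) / (1 + (r / t) ^ 2) ^ ((((k+1:ℕ):ℝ) + 1) / 2) * (r * -(t ^ 2)⁻¹)) t := hF
    have hmain := hF'.const_mul (C * (x j / r^(k+1)))
    have heq : (fun s : ℝ => potB0 (k+1) j s x)
        = fun s : ℝ => C * (x j / r^(k+1)) * Fpot (k+1) (r / s) := by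
      funext s; simp [potB0, hC, hrdef]
    rw [heq, hmain.deriv]
    simp only [poissonQ, ← hrdef, hneg, ← hC]
    rw [show (k+1-1) = k from rfl, hkey]
    have h2 : (t^2 + r^2) ^ ((((k+1:ℕ):ℝ)+1)/2) ≠ 0 := hAp.ne'
    field_simp
    rw [div_pow]
    field_simp
    ring
  · -- part (b)
    have hsum : ∀ j : Fin (k+1),
        deriv (fun s : ℝ => potB0 (k+1) j t (x + s • EuclideanSpace.single j (1:ℝ))) 0
        = C * (r^(k+1) / (r^(k+1))^2 * Fpot (k+1) (r/t))
          + (x j)^2 * (C * (-(((k:ℝ)+1) * r^k / r) / (r^(k+1))^2 * Fpot (k+1) (r/t)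
              + ((r/t)^k / (1 + (r/t)^2) ^ ((((k+1:ℕ):ℝ)+1)/2)) / (r^(k+1) * r * t))) := by
      intro j
      rw [deriv_potB0_dir k t ht x hx j j]
      simp only [if_pos rfl, ↓reduceIte, ← hC, ← hrdef]
      field_simp
      ring
    rw [Finset.sum_congr rfl (fun j _ => hsum j)]
    rw [Finset.sum_add_distrib, Finset.sum_const, ← Finset.sum_mul]
    have hx2 : ∑ j : Fin (k+1), (x j)^2 = r^2 := by
      rw [hrdef, EuclideanSpace.norm_eq, Real.sq_sqrt (by positivity)]
      congr 1
      funext j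
      simp [sq_abs]
    rw [hx2]
    simp only [poissonP, hneg, ← hC, Finset.card_univ, Fintype.card_fin, hkey, ← hrdef]
    rw [div_pow, nsmul_eq_mul]
    have h2 : (t^2 + r^2) ^ ((((k+1:ℕ):ℝ)+1)/2) ≠ 0 := hAp.ne'
    field_simp
    push_cast
    ring
  · -- part (c)
    intro i j
    rw [deriv_potB0_dir k t ht x hx i j, deriv_potB0_dir k t ht x hx j i]
    rw [show (if j = i then (1:ℝ) else 0) = (if i = j then (1:ℝ) else 0) by simp [eq_comm]]
    ring
end

section
/- Let m ≥ 1 be an integer and define B_{0,j}(t,x) = (2/σ_{m+1}) (x_j/|x|^m) F_m(|x|/t) for t > 0 and x ∈ ℝ^m, x ≠ 0, where F_m(v) = ∫_0^v η^{m-1}(1+η²)^{-(m+1)/2} dη. Then each component B_{0,j} is harmonic on {(t,x) ∈ ℝ × ℝ^m : t > 0, x ≠ 0}: ∂_t² B_{0,j} + Σ_{i=1}^m ∂_{x_i}² B_{0,j} = 0. (This expresses that B_0 is a harmonic potential, conjugate harmonic to A_0, in upper half-space.) -/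
open MeasureTheory

lemma fpot_cont (k : ℕ) :
    Continuous (fun η : ℝ => η ^ (k - 1) / (1 + η ^ 2) ^ (((k : ℝ) + 1) / 2)) := by
  apply Continuous.div (by continuity)
  · exact (by continuity : Continuous fun η : ℝ => 1 + η ^ 2).rpow_const
      (fun x => Or.inl (by positivity))
  · intro x
    exact ne_of_gt (Real.rpow_pos_of_pos (by positivity) _)

lemma fpot_hasDerivAt (k : ℕ) (v : ℝ) :
    HasDerivAt (Fpot k) (v ^ (k - 1) / (1 + v ^ 2) ^ (((k : ℝ) + 1) / 2)) v :=
  intervalIntegral.integral_hasDerivAt_right ((fpot_cont k).intervalIntegrable _ _)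
    ((fpot_cont k).stronglyMeasurable.stronglyMeasurableAtFilter)
    (fpot_cont k).continuousAt

noncomputable def Gfun (m : ℕ) (t w : ℝ) : ℝ := w ^ (-(m:ℝ)/2) * Fpot m (Real.sqrt w / t)
noncomputable def Afun (m : ℕ) (t w : ℝ) : ℝ := (t^2 + w) ^ (-((m:ℝ)+1)/2)
noncomputable def Gd (m : ℕ) (t w : ℝ) : ℝ :=
  w⁻¹ * (-((m:ℝ)/2) * Gfun m t w + t/2 * Afun m t w)
noncomputable def Gdd (m : ℕ) (t w : ℝ) : ℝ :=
  -((w^2)⁻¹) * (-((m:ℝ)/2) * Gfun m t w + t/2 * Afun m t w) +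
    w⁻¹ * (-((m:ℝ)/2) * Gd m t w + t/2 * (-((m:ℝ)+1)/2 * Afun m t w / (t^2+w)))

lemma afun_hasDerivAt (m : ℕ) {t w : ℝ} (h : 0 < t^2 + w) :
    HasDerivAt (Afun m t) (-((m:ℝ)+1)/2 * Afun m t w / (t^2+w)) w := by
  have h1 : HasDerivAt (fun w : ℝ => t^2 + w) 1 w := by
    simpa using (hasDerivAt_id w).const_add (t^2)
  have h2 := (Real.hasDerivAt_rpow_const (p := -((m:ℝ)+1)/2) (Or.inl h.ne')).comp w h1
  refine h2.congr_deriv ?_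
  rw [Real.rpow_sub_one h.ne']
  unfold Afun
  ring

lemma gfun_key (m : ℕ) (hm : 1 ≤ m) {t w : ℝ} (ht : 0 < t) (hw : 0 < w) :
    w ^ (-(m:ℝ)/2) * ((Real.sqrt w/t) ^ (m-1) / (1 + (Real.sqrt w/t)^2) ^ (((m:ℝ)+1)/2)
        * (1/(2*Real.sqrt w)/t))
      = w⁻¹ * (t/2 * (t^2+w) ^ (-((m:ℝ)+1)/2)) := by
  have htw : (0:ℝ) < t^2 + w := by positivity
  have h2 : (1 + (Real.sqrt w/t)^2) = (t^2+w)/t^2 := by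
    rw [div_pow, Real.sq_sqrt hw.le]; field_simp
  have h4 : (Real.sqrt w / t) ^ (m-1) = w ^ (((m:ℝ)-1)/2) / t ^ ((m:ℝ)-1) := by
    rw [div_pow, ← Real.rpow_natCast (Real.sqrt w) (m-1), ← Real.rpow_natCast t (m-1),
      Real.sqrt_eq_rpow, ← Real.rpow_mul hw.le, Nat.cast_sub hm, Nat.cast_one]
    ring_nf
  have h3 : ((t^2:ℝ)) ^ (((m:ℝ)+1)/2) = t ^ ((m:ℝ)+1) := by
    rw [← Real.rpow_natCast t 2, ← Real.rpow_mul ht.le]; congr 1; ring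
  have hneg : (-((m:ℝ)+1)/2) = -(((m:ℝ)+1)/2) := by ring
  rw [h2, h4, Real.div_rpow (by positivity) (by positivity), h3, hneg,
    Real.rpow_neg htw.le, Real.sqrt_eq_rpow]
  have e1 : (t^2+w) ^ (((m:ℝ)+1)/2) ≠ 0 := ne_of_gt (Real.rpow_pos_of_pos htw _)
  have e2 : t ^ ((m:ℝ)-1) ≠ 0 := ne_of_gt (Real.rpow_pos_of_pos ht _)
  have e3 : t ^ ((m:ℝ)+1) ≠ 0 := ne_of_gt (Real.rpow_pos_of_pos ht _)
  have e4 : w ^ ((1:ℝ)/2) ≠ 0 := ne_of_gt (Real.rpow_pos_of_pos hw _)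
  have e5 : w ^ (((m:ℝ)-1)/2) ≠ 0 := ne_of_gt (Real.rpow_pos_of_pos hw _)
  have e6 : w ^ (-(m:ℝ)/2) ≠ 0 := ne_of_gt (Real.rpow_pos_of_pos hw _)
  field_simp
  ring_nf
  rw [← Real.rpow_add hw, show (m:ℝ) * (-1 / 2) + (-1 / 2 + (m:ℝ) * (1 / 2)) = -(1/2) by ring]
  have hw1 : w ^ (-(1/2):ℝ) * w = w ^ ((1:ℝ)/2) := by
    nth_rewrite 2 [(Real.rpow_one w).symm]
    rw [← Real.rpow_add hw]; norm_num
  have ht1 : t^2 * t ^ (-1+(m:ℝ)) = t ^ (1+(m:ℝ)) := by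
    rw [← Real.rpow_natCast t 2, ← Real.rpow_add ht]; congr 1; push_cast; ring
  linear_combination (t ^ (1+(m:ℝ))) * hw1
    - (w ^ ((1:ℝ)/2)) * ht1

lemma tslice_key (m : ℕ) (hm : 1 ≤ m) {r u : ℝ} (hr : 0 < r) (hu : 0 < u) :
    (1 / r^m) * ((r/u) ^ (m-1) / (1 + (r/u)^2) ^ (((m:ℝ)+1)/2)) * (r/u^2)
      = (u^2+r^2) ^ (-((m:ℝ)+1)/2) := by
  have hur : (0:ℝ) < u^2 + r^2 := by positivity
  have h2 : (1 + (r/u)^2) = (u^2+r^2)/u^2 := by field_simp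
  have h4 : (r/u) ^ (m-1) = r ^ ((m:ℝ)-1) / u ^ ((m:ℝ)-1) := by
    rw [div_pow, ← Real.rpow_natCast r (m-1), ← Real.rpow_natCast u (m-1),
      Nat.cast_sub hm, Nat.cast_one]
  have h3 : ((u^2:ℝ)) ^ (((m:ℝ)+1)/2) = u ^ ((m:ℝ)+1) := by
    rw [← Real.rpow_natCast u 2, ← Real.rpow_mul hu.le]; congr 1; ring
  have hrm : (r:ℝ)^m = r ^ ((m:ℝ)) := (Real.rpow_natCast r m).symm
  have hneg : (-((m:ℝ)+1)/2) = -(((m:ℝ)+1)/2) := by ring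
  rw [h2, h4, Real.div_rpow (by positivity) (by positivity), h3, hrm, hneg,
    Real.rpow_neg hur.le]
  have e1 : (u^2+r^2) ^ (((m:ℝ)+1)/2) ≠ 0 := ne_of_gt (Real.rpow_pos_of_pos hur _)
  have e2 : u ^ ((m:ℝ)-1) ≠ 0 := ne_of_gt (Real.rpow_pos_of_pos hu _)
  have e3 : u ^ ((m:ℝ)+1) ≠ 0 := ne_of_gt (Real.rpow_pos_of_pos hu _)
  have e5 : r ^ ((m:ℝ)-1) ≠ 0 := ne_of_gt (Real.rpow_pos_of_pos hr _)
  have e6 : r ^ ((m:ℝ)) ≠ 0 := ne_of_gt (Real.rpow_pos_of_pos hr _)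
  field_simp
  ring_nf
  have a1 : r ^ ((-1:ℝ)+(m:ℝ)) * r = r ^ m := by
    nth_rewrite 2 [(Real.rpow_one r).symm]
    rw [← Real.rpow_add hr, ← Real.rpow_natCast r m]; congr 1; ring
  have a2 : u^2 * u ^ ((-1:ℝ)+(m:ℝ)) = u ^ ((1:ℝ)+(m:ℝ)) := by
    rw [← Real.rpow_natCast u 2, ← Real.rpow_add hu]; congr 1; push_cast; ring
  linear_combination (u ^ ((1:ℝ)+(m:ℝ))) * a1
    - ((r:ℝ) ^ (m:ℝ)) * a2 + (u ^ ((1:ℝ)+(m:ℝ))) * hrm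

lemma gfun_hasDerivAt (m : ℕ) (hm : 1 ≤ m) {t w : ℝ} (ht : 0 < t) (hw : 0 < w) :
    HasDerivAt (Gfun m t) (Gd m t w) w := by
  have hsq : HasDerivAt Real.sqrt (1/(2*Real.sqrt w)) w := Real.hasDerivAt_sqrt hw.ne'
  have hv : HasDerivAt (fun w : ℝ => Real.sqrt w / t) (1/(2*Real.sqrt w)/t) w := hsq.div_const t
  have hF : HasDerivAt (fun w : ℝ => Fpot m (Real.sqrt w / t))
      ((Real.sqrt w/t) ^ (m-1) / (1 + (Real.sqrt w/t)^2) ^ (((m:ℝ)+1)/2)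
        * (1/(2*Real.sqrt w)/t)) w :=
    (fpot_hasDerivAt m _).comp w hv
  have hP : HasDerivAt (fun w : ℝ => w ^ (-(m:ℝ)/2)) (-(m:ℝ)/2 * w ^ (-(m:ℝ)/2 - 1)) w :=
    Real.hasDerivAt_rpow_const (Or.inl hw.ne')
  have h := hP.mul hF
  refine h.congr_deriv ?_
  unfold Gd Gfun Afun
  rw [Real.rpow_sub_one hw.ne', mul_add, ← gfun_key m hm ht hw]
  all_goals try ring

lemma gd_hasDerivAt (m : ℕ) (hm : 1 ≤ m) {t w : ℝ} (ht : 0 < t) (hw : 0 < w) :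
    HasDerivAt (Gd m t) (Gdd m t w) w := by
  have h1 : HasDerivAt (fun w : ℝ => w⁻¹) (-(w^2)⁻¹) w := hasDerivAt_inv hw.ne'
  have h2 : HasDerivAt (fun w => -((m:ℝ)/2) * Gfun m t w + t/2 * Afun m t w)
      (-((m:ℝ)/2) * Gd m t w + t/2 * (-((m:ℝ)+1)/2 * Afun m t w / (t^2+w))) w :=
    ((gfun_hasDerivAt m hm ht hw).const_mul _).add
      ((afun_hasDerivAt m (by positivity)).const_mul _)
  have h := h1.mul h2
  refine h.congr_deriv ?_
  all_goals unfold Gdd Gd; ring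

lemma potB0_eq (m : ℕ) (j : Fin m) (t : ℝ) {y : EuclideanSpace ℝ (Fin m)} (hy : y ≠ 0) :
    potB0 m j t y = 2 / sphereArea (m + 1) * (y j) * Gfun m t (‖y‖^2) := by
  have hy' : 0 < ‖y‖ := norm_pos_iff.mpr hy
  unfold potB0 Gfun
  rw [Real.sqrt_sq (norm_nonneg y)]
  have h1 : ((‖y‖^2 : ℝ)) ^ (-(m:ℝ)/2) = (‖y‖^m)⁻¹ := by
    rw [← Real.rpow_natCast ‖y‖ 2, ← Real.rpow_mul (norm_nonneg y),
      show ((2:ℕ):ℝ) * (-(m:ℝ)/2) = -(m:ℝ) by push_cast; ring,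
      Real.rpow_neg (norm_nonneg y), Real.rpow_natCast]
  rw [h1]
  ring

theorem B0_harmonic
    (m : ℕ) (hm : 1 ≤ m) (t : ℝ) (ht : 0 < t) (x : EuclideanSpace ℝ (Fin m)) (hx : x ≠ 0)
    (j : Fin m) :
    deriv (fun s => deriv (fun u => potB0 m j u x) s) t +
      ∑ i : Fin m,
        deriv (fun s : ℝ =>
          deriv (fun u : ℝ => potB0 m j t (x + u • EuclideanSpace.single i (1 : ℝ))) s) 0 = 0 := by
  have hr : 0 < ‖x‖ := norm_pos_iff.mpr hx
  have hS : 0 < ‖x‖^2 := by positivity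
  set c : ℝ := 2 / sphereArea (m+1) with hc
  set S : ℝ := ‖x‖^2 with hSdef
  have htS : 0 < t^2 + S := by positivity
  -- the t part
  have hT1 : ∀ u : ℝ, 0 < u → HasDerivAt (fun u => potB0 m j u x)
      (-(c * x j) * (u^2 + S) ^ (-((m:ℝ)+1)/2)) u := by
    intro u hu
    have hinv : HasDerivAt (fun u : ℝ => ‖x‖ / u) (‖x‖ * -(u^2)⁻¹) u := by
      simpa [div_eq_mul_inv] using (hasDerivAt_inv hu.ne').const_mul ‖x‖
    have hF := ((fpot_hasDerivAt m (‖x‖/u)).comp u hinv).const_mul (c * (x j / ‖x‖^m))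
    have hpot : HasDerivAt (fun u => potB0 m j u x)
        (c * (x j / ‖x‖^m) * ((‖x‖/u) ^ (m-1) / (1+(‖x‖/u)^2) ^ (((m:ℝ)+1)/2)
          * (‖x‖ * -(u^2)⁻¹))) u := by
      simpa [potB0, Function.comp] using hF
    convert hpot using 1
    have hk := tslice_key m hm hr hu
    rw [hSdef]
    linear_combination (c * x j) * hk
  have hTev : deriv (fun u => potB0 m j u x)
      =ᶠ[nhds t] fun u => -(c * x j) * (u^2 + S) ^ (-((m:ℝ)+1)/2) := by
    filter_upwards [IsOpen.mem_nhds isOpen_Ioi ht] with u hu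
    exact (hT1 u hu).deriv
  have hT2 : HasDerivAt (fun u : ℝ => -(c * x j) * (u^2 + S) ^ (-((m:ℝ)+1)/2))
      (c * x j * (((m:ℝ)+1) * t * ((t^2+S) ^ (-((m:ℝ)+1)/2) / (t^2+S)))) t := by
    have h1 : HasDerivAt (fun u : ℝ => u^2 + S) (2*t) t := by
      simpa using (hasDerivAt_pow 2 t).add_const S
    have h2 := ((Real.hasDerivAt_rpow_const (x := t^2+S) (p := -((m:ℝ)+1)/2)
      (Or.inl htS.ne')).comp t h1).const_mul (-(c * x j))
    refine h2.congr_deriv ?_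
    rw [Real.rpow_sub_one htS.ne']
    ring
  have hTval : deriv (fun s => deriv (fun u => potB0 m j u x) s) t
      = c * x j * (((m:ℝ)+1) * t * ((t^2+S) ^ (-((m:ℝ)+1)/2) / (t^2+S))) :=
    (Filter.EventuallyEq.deriv_eq hTev).trans hT2.deriv
  -- the x part
  have hX : ∀ i : Fin m,
      deriv (fun s : ℝ =>
          deriv (fun u : ℝ => potB0 m j t (x + u • EuclideanSpace.single i (1 : ℝ))) s) 0
      = c * (4 * (if j = i then (1:ℝ) else 0) * x i * Gd m t S
          + 4 * (x i)^2 * x j * Gdd m t S + 2 * x j * Gd m t S) := by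
    intro i
    set δ : ℝ := if j = i then (1:ℝ) else 0 with hδ
    set q : ℝ → ℝ := fun u => S + (2 * x i) * u + u^2 with hq
    have hqc : Continuous q := by fun_prop
    have hnorm : ∀ u : ℝ, ‖x + u • EuclideanSpace.single i (1:ℝ)‖^2 = q u := by
      intro u
      rw [norm_add_sq_real, real_inner_smul_right, EuclideanSpace.inner_single_right,
        norm_smul, EuclideanSpace.norm_single]
      simp [hq, Real.norm_eq_abs, sq_abs, mul_pow]
      ring
    have hq0 : q 0 = S := by simp [hq]
    have hqpos : ∀ᶠ u in nhds 0, 0 < q u := by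
      have hco : ContinuousAt q 0 := hqc.continuousAt
      have hmem : q ⁻¹' (Set.Ioi 0) ∈ nhds 0 := by
        apply hco.preimage_mem_nhds
        rw [hq0]
        exact Ioi_mem_nhds hS
      filter_upwards [hmem] with u hu using hu
    have hne : ∀ u : ℝ, 0 < q u → x + u • EuclideanSpace.single i (1:ℝ) ≠ 0 := by
      intro u hu h0
      have h1 := hnorm u
      rw [h0] at h1
      simp at h1
      rw [← h1] at hu
      exact lt_irrefl 0 hu
    have hcomp : ∀ u : ℝ, (x + u • EuclideanSpace.single i (1:ℝ)) j = x j + δ * u := by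
      intro u
      simp only [PiLp.add_apply, PiLp.smul_apply, EuclideanSpace.single_apply, smul_eq_mul, hδ]
      by_cases h : j = i <;> simp [h] <;> try ring
    have hev1 : (fun u : ℝ => potB0 m j t (x + u • EuclideanSpace.single i (1:ℝ)))
        =ᶠ[nhds 0] fun u => c * ((x j + δ * u) * Gfun m t (q u)) := by
      filter_upwards [hqpos] with u hu
      rw [potB0_eq m j t (hne u hu), hnorm u, hcomp u, mul_assoc]
    have hqd : ∀ u : ℝ, HasDerivAt q (2 * x i + 2*u) u := by
      intro u
      have h1 : HasDerivAt (fun u : ℝ => S + (2 * x i) * u) (2 * x i) u := by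
        simpa using ((hasDerivAt_id u).const_mul (2 * x i)).const_add S
      have h2 := h1.add (hasDerivAt_pow 2 u)
      have he : (2:ℝ) * x i + 2 * u = 2 * x i + (2:ℕ) * u ^ (2-1) := by norm_num
      rw [he, hq]
      exact h2
    have hlin : ∀ u : ℝ, HasDerivAt (fun u : ℝ => x j + δ * u) δ u := by
      intro u
      simpa using ((hasDerivAt_id u).const_mul δ).const_add (x j)
    have hD1 : ∀ u : ℝ, 0 < q u → HasDerivAt (fun u => c * ((x j + δ * u) * Gfun m t (q u)))
        (c * (δ * Gfun m t (q u) + (x j + δ * u) * (Gd m t (q u) * (2 * x i + 2*u)))) u := by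
      intro u hu
      have hG := (gfun_hasDerivAt m hm ht hu).comp u (hqd u)
      exact ((hlin u).mul hG).const_mul c
    have hev2 : deriv (fun u : ℝ => potB0 m j t (x + u • EuclideanSpace.single i (1:ℝ)))
        =ᶠ[nhds 0] fun u =>
          c * (δ * Gfun m t (q u) + (x j + δ * u) * (Gd m t (q u) * (2 * x i + 2*u))) := by
      filter_upwards [hev1.deriv, hqpos] with u h1 h2
      rw [h1]
      exact (hD1 u h2).deriv
    have hq0' : 0 < q 0 := by rw [hq0]; exact hS
    have hD2 : HasDerivAt (fun u : ℝ =>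
        c * (δ * Gfun m t (q u) + (x j + δ * u) * (Gd m t (q u) * (2 * x i + 2*u))))
        (c * (4 * δ * x i * Gd m t S + 4 * (x i)^2 * x j * Gdd m t S + 2 * x j * Gd m t S)) 0 := by
      have hG := (gfun_hasDerivAt m hm ht hq0').comp 0 (hqd 0)
      have hGd := (gd_hasDerivAt m hm ht hq0').comp 0 (hqd 0)
      have hpoly : HasDerivAt (fun u : ℝ => 2 * x i + 2 * u) 2 0 := by
        simpa using ((hasDerivAt_id (0:ℝ)).const_mul 2).const_add (2 * x i)
      have h := (((hG.const_mul δ).add ((hlin 0).mul (hGd.mul hpoly))).const_mul c)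
      refine h.congr_deriv ?_
      simp only [Function.comp_apply, Pi.mul_apply]
      rw [hq0]
      ring
    rw [Filter.EventuallyEq.deriv_eq hev2, hD2.deriv]
  -- sum over i
  have hSsum : ∑ i : Fin m, (x i)^2 = S := by
    rw [hSdef, EuclideanSpace.norm_eq, Real.sq_sqrt (by positivity)]
    simp [Real.norm_eq_abs, sq_abs]
  have hsum : (∑ i : Fin m,
      deriv (fun s : ℝ =>
        deriv (fun u : ℝ => potB0 m j t (x + u • EuclideanSpace.single i (1 : ℝ))) s) 0)
      = c * x j * (4 * Gd m t S + 4 * S * Gdd m t S + 2 * m * Gd m t S) := by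
    rw [Finset.sum_congr rfl fun i _ => hX i]
    have hterm : ∀ i : Fin m,
        c * (4 * (if j = i then (1:ℝ) else 0) * x i * Gd m t S
          + 4 * (x i)^2 * x j * Gdd m t S + 2 * x j * Gd m t S)
        = (if j = i then c * (4 * x j * Gd m t S) else 0)
          + (c * (4 * x j * Gdd m t S)) * (x i)^2 + c * (2 * x j * Gd m t S) := by
      intro i
      by_cases h : j = i
      · subst h
        simp only [if_true]
        ring
      · simp [h]; ring
    rw [Finset.sum_congr rfl fun i _ => hterm i]
    rw [Finset.sum_add_distrib, Finset.sum_add_distrib, Finset.sum_ite_eq, ← Finset.mul_sum,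
      hSsum, Finset.sum_const, Finset.card_univ, Fintype.card_fin]
    simp only [Finset.mem_univ, if_true, nsmul_eq_mul]
    ring
  rw [hTval, hsum]
  have hA : (t^2+S) ^ (-((m:ℝ)+1)/2) = Afun m t S := rfl
  rw [hA]
  simp only [Gdd, Gd]
  field_simp
  ring
end

section
/- Let m ≥ 3 be an integer and define, for t > 0 and x ∈ ℝ^m with x ≠ 0, A_1(t,x) = (2/((m-1)σ_{m+1})) |x|^{2-m} F_{m-2}(|x|/t) and B_{1,j}(t,x) = (2/σ_{m+1}) (t x_j/|x|^m) F_m(|x|/t) - (2/((m-1)σ_{m+1})) x_j (t²+|x|²)^{-(m-1)/2}, where F_k(v) = ∫_0^v η^{k-1}(1+η²)^{-(k+1)/2} dη. Then for every x ≠ 0: lim_{t → 0+} A_1(t,x) = (1/((m-2)σ_m)) |x|^{2-m}, and lim_{t → 0+} B_{1,j}(t,x) = -(2/((m-1)σ_{m+1})) x_j/|x|^{m-1} for every j. (These are the boundary values a_1 and b_1 of the conjugate harmonic potentials A_1 and B_1.) -/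
open MeasureTheory

/-- The upstream harmonic potential
`A_1(t,x) = (2/((m-1)σ_{m+1})) |x|^{2-m} F_{m-2}(|x|/t)`. -/
noncomputable def potA1 (m : ℕ) (t : ℝ) (x : EuclideanSpace ℝ (Fin m)) : ℝ :=
  2 / (((m : ℝ) - 1) * sphereArea (m + 1)) * ‖x‖ ^ (2 - (m : ℝ)) * Fpot (m - 2) (‖x‖ / t)

/-- The components `B_{1,j}(t,x) = (2/σ_{m+1}) (t x_j/|x|^m) F_m(|x|/t)
  - (2/((m-1)σ_{m+1})) x_j (t²+|x|²)^{-(m-1)/2}` of the conjugate harmonic potential `B_1`. -/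
noncomputable def potB1 (m : ℕ) (j : Fin m) (t : ℝ) (x : EuclideanSpace ℝ (Fin m)) : ℝ :=
  2 / sphereArea (m + 1) * (t * x j / ‖x‖ ^ m) * Fpot m (‖x‖ / t) -
    2 / (((m : ℝ) - 1) * sphereArea (m + 1)) * x j * (t ^ 2 + ‖x‖ ^ 2) ^ (-(((m : ℝ) - 1) / 2))

open Real Filter in
lemma sin_pow_integral_val (n : ℕ) :
    ∫ x in (0:ℝ)..(Real.pi/2), Real.sin x ^ n
      = Real.sqrt Real.pi * Real.Gamma (((n:ℝ)+1)/2) / (2 * Real.Gamma ((n:ℝ)/2 + 1)) := by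
  induction n using Nat.twoStepInduction with
  | zero =>
      simp only [pow_zero, Nat.cast_zero, zero_add, zero_div]
      rw [intervalIntegral.integral_const, Real.Gamma_one, Real.Gamma_one_half_eq,
        smul_eq_mul, Real.mul_self_sqrt Real.pi_pos.le]
      ring
  | one =>
      simp only [pow_one, Nat.cast_one]
      rw [integral_sin]
      rw [show (1:ℝ)/2 + 1 = (1/2 : ℝ) + 1 by norm_num,
        Real.Gamma_add_one (by norm_num : (1:ℝ)/2 ≠ 0), Real.Gamma_one_half_eq,
        show ((1:ℝ)+1)/2 = 1 by norm_num, Real.Gamma_one]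
      have hs : Real.sqrt Real.pi ≠ 0 := by positivity
      rw [Real.cos_zero, Real.cos_pi_div_two]
      field_simp
      norm_num
  | more n ih _ =>
      rw [integral_sin_pow n, Real.sin_zero, Real.cos_pi_div_two, ih]
      push_cast
      have hg1 : Real.Gamma (((n:ℝ)+2)/2 + 1)
          = ((n:ℝ)/2 + 1) * Real.Gamma ((n:ℝ)/2 + 1) := by
        rw [show ((n:ℝ)+2)/2 + 1 = ((n:ℝ)/2 + 1) + 1 by ring,
          Real.Gamma_add_one (by positivity)]
      have hg2 : Real.Gamma (((n:ℝ)+2+1)/2)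
          = (((n:ℝ)+1)/2) * Real.Gamma (((n:ℝ)+1)/2) := by
        rw [show ((n:ℝ)+2+1)/2 = (((n:ℝ)+1)/2) + 1 by ring,
          Real.Gamma_add_one (by positivity)]
      rw [hg1, hg2]
      have p1 : 0 < Real.Gamma ((n:ℝ)/2 + 1) := Real.Gamma_pos_of_pos (by positivity)
      have p2 : (0:ℝ) < (n:ℝ) + 2 := by positivity
      field_simp
      ring

open Real Filter in
lemma Fpot_eq_sin (k : ℕ) (hk : 1 ≤ k) (v : ℝ) :
    Fpot k v = ∫ x in (0:ℝ)..Real.arctan v, Real.sin x ^ (k-1) := by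
  obtain ⟨j, rfl⟩ : ∃ j, k = j + 1 := ⟨k - 1, by omega⟩
  set g : ℝ → ℝ := fun y => y ^ j / (1 + y ^ 2) ^ ((((j:ℝ)+1) + 1) / 2) with hgdef
  have hgcont : Continuous g := by
    apply (continuous_pow j).div
    · exact (continuous_const.add (continuous_pow 2)).rpow_const
        (fun y => Or.inr (by positivity))
    · intro y
      exact ne_of_gt (Real.rpow_pos_of_pos (by positivity) _)
  have hcos : ∀ x ∈ Set.uIcc (0:ℝ) (Real.arctan v), 0 < Real.cos x := by
    intro x hx
    apply Real.cos_pos_of_mem_Ioo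
    constructor
    · calc -(Real.pi/2) < min 0 (Real.arctan v) :=
            lt_min (by simpa using Real.pi_div_two_pos) (Real.neg_pi_div_two_lt_arctan v)
        _ ≤ x := hx.1
    · calc x ≤ max 0 (Real.arctan v) := hx.2
        _ < Real.pi/2 := max_lt Real.pi_div_two_pos (Real.arctan_lt_pi_div_two v)
  have hderiv : ∀ x ∈ Set.uIcc (0:ℝ) (Real.arctan v),
      HasDerivAt Real.tan (1 / Real.cos x ^ 2) x :=
    fun x hx => Real.hasDerivAt_tan (ne_of_gt (hcos x hx))
  have hcont : ContinuousOn (fun x => 1 / Real.cos x ^ 2)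
      (Set.uIcc (0:ℝ) (Real.arctan v)) :=
    ContinuousOn.div continuousOn_const ((Real.continuous_cos.pow 2).continuousOn)
      (fun x hx => pow_ne_zero 2 (ne_of_gt (hcos x hx)))
  have key := intervalIntegral.integral_comp_smul_deriv hderiv hcont hgcont
  rw [Real.tan_zero, Real.tan_arctan] at key
  have hF : Fpot (j+1) v = ∫ y in (0:ℝ)..v, g y := by
    simp only [Fpot, hgdef, Nat.add_sub_cancel, Nat.cast_add, Nat.cast_one]
  rw [hF, ← key]
  apply intervalIntegral.integral_congr
  intro x hx
  have hc := hcos x hx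
  simp only [Function.comp, smul_eq_mul, hgdef, Nat.add_sub_cancel]
  have h1 : 1 + Real.tan x ^ 2 = (Real.cos x ^ 2)⁻¹ := by
    rw [← Real.inv_one_add_tan_sq (ne_of_gt hc), inv_inv]
  have h2 : ((Real.cos x ^ 2)⁻¹ : ℝ) ^ ((((j:ℝ)+1) + 1) / 2)
      = (Real.cos x ^ (j+2))⁻¹ := by
    rw [← Real.rpow_natCast (Real.cos x) 2, ← Real.rpow_neg_one,
      ← Real.rpow_natCast (Real.cos x) (j+2)]
    rw [← Real.rpow_mul hc.le, ← Real.rpow_mul hc.le, ← Real.rpow_neg_one,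
      ← Real.rpow_mul hc.le]
    congr 1
    push_cast
    ring
  have hcne : Real.cos x ≠ 0 := ne_of_gt hc
  rw [h1, h2, Real.tan_eq_sin_div_cos, div_pow]
  field_simp
  ring_nf

open Real Filter in
lemma Fpot_tendsto (k : ℕ) (hk : 1 ≤ k) :
    Filter.Tendsto (fun v => Fpot k v) Filter.atTop
      (nhds (∫ x in (0:ℝ)..(Real.pi/2), Real.sin x ^ (k-1))) := by
  have hInt : ∀ a b : ℝ, IntervalIntegrable (fun x => Real.sin x ^ (k-1)) volume a b :=
    fun a b => (Real.continuous_sin.pow _).intervalIntegrable a b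
  have hG : Continuous fun u => ∫ x in (0:ℝ)..u, Real.sin x ^ (k-1) :=
    intervalIntegral.continuous_primitive hInt 0
  have h1 : Filter.Tendsto Real.arctan Filter.atTop (nhds (Real.pi/2)) :=
    Real.tendsto_arctan_atTop.mono_right nhdsWithin_le_nhds
  have h2 := (hG.continuousAt (x := Real.pi/2)).tendsto.comp h1
  refine h2.congr fun v => ?_
  exact (Fpot_eq_sin k hk v).symm

open Real Filter in
theorem A1_B1_boundary_values
    (m : ℕ) (hm : 3 ≤ m) (x : EuclideanSpace ℝ (Fin m)) (hx : x ≠ 0) :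
    Filter.Tendsto (fun t : ℝ => potA1 m t x) (nhdsWithin 0 (Set.Ioi 0))
      (nhds (1 / (((m : ℝ) - 2) * sphereArea m) * ‖x‖ ^ (2 - (m : ℝ)))) ∧
    ∀ j : Fin m,
      Filter.Tendsto (fun t : ℝ => potB1 m j t x) (nhdsWithin 0 (Set.Ioi 0))
        (nhds (-(2 / (((m : ℝ) - 1) * sphereArea (m + 1))) * x j / ‖x‖ ^ (m - 1))) := by
  have hxn : 0 < ‖x‖ := norm_pos_iff.mpr hx
  have hM3 : (3:ℝ) ≤ (m:ℝ) := by exact_mod_cast hm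
  have hvt : Filter.Tendsto (fun t : ℝ => ‖x‖ / t) (nhdsWithin 0 (Set.Ioi 0))
      Filter.atTop := by
    simpa [div_eq_mul_inv] using tendsto_inv_nhdsGT_zero.const_mul_atTop hxn
  -- Gamma positivity facts
  have hg1 : 0 < Real.Gamma (((m:ℝ)-2)/2) := Real.Gamma_pos_of_pos (by linarith)
  have hg2 : 0 < Real.Gamma (((m:ℝ)-1)/2) := Real.Gamma_pos_of_pos (by linarith)
  have hGm : Real.Gamma ((m:ℝ)/2) = (((m:ℝ)-2)/2) * Real.Gamma (((m:ℝ)-2)/2) := by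
    rw [show (m:ℝ)/2 = ((m:ℝ)-2)/2 + 1 by ring, Real.Gamma_add_one (by linarith)]
  have hGm1 : Real.Gamma (((m:ℝ)+1)/2) = (((m:ℝ)-1)/2) * Real.Gamma (((m:ℝ)-1)/2) := by
    rw [show ((m:ℝ)+1)/2 = ((m:ℝ)-1)/2 + 1 by ring, Real.Gamma_add_one (by linarith)]
  have hpipos := Real.pi_pos
  have hrp : (0:ℝ) < Real.pi ^ ((m:ℝ)/2) := Real.rpow_pos_of_pos hpipos _
  have hsqpi : (0:ℝ) < Real.sqrt Real.pi := Real.sqrt_pos.mpr hpipos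
  have hpiM1 : Real.pi ^ (((m:ℝ)+1)/2) = Real.pi ^ ((m:ℝ)/2) * Real.sqrt Real.pi := by
    rw [Real.sqrt_eq_rpow, ← Real.rpow_add hpipos]
    congr 1
    ring
  have hsA : sphereArea (m+1) = 2 * Real.pi ^ (((m:ℝ)+1)/2) / Real.Gamma (((m:ℝ)+1)/2) := by
    simp only [sphereArea]
    push_cast
    ring_nf
  have hsApos : 0 < sphereArea (m+1) := by
    rw [hsA]
    positivity
  have hsAm : sphereArea m = 2 * Real.pi ^ ((m:ℝ)/2) / Real.Gamma ((m:ℝ)/2) := rfl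
  have hsAmpos : 0 < sphereArea m := by
    rw [hsAm]
    have := Real.Gamma_pos_of_pos (show (0:ℝ) < (m:ℝ)/2 by linarith)
    positivity
  constructor
  · -- A part
    have hcast : (((m-3 : ℕ)):ℝ) = (m:ℝ) - 3 := by
      have : ((3:ℕ):ℝ) ≤ (m:ℝ) := by exact_mod_cast hm
      push_cast [Nat.cast_sub hm]
      ring
    have hS : (∫ x in (0:ℝ)..(Real.pi/2), Real.sin x ^ (m - 2 - 1))
        = Real.sqrt Real.pi * Real.Gamma (((m:ℝ)-2)/2)
          / (2 * Real.Gamma (((m:ℝ)-1)/2)) := by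
      rw [show m - 2 - 1 = m - 3 by omega, sin_pow_integral_val (m-3), hcast]
      rw [show ((m:ℝ)-3+1)/2 = ((m:ℝ)-2)/2 by ring,
        show ((m:ℝ)-3)/2 + 1 = ((m:ℝ)-1)/2 by ring]
    have hFA : Filter.Tendsto (fun t : ℝ => Fpot (m-2) (‖x‖/t))
        (nhdsWithin 0 (Set.Ioi 0))
        (nhds (Real.sqrt Real.pi * Real.Gamma (((m:ℝ)-2)/2)
          / (2 * Real.Gamma (((m:ℝ)-1)/2)))) := by
      rw [← hS]
      exact (Fpot_tendsto (m-2) (by omega)).comp hvt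
    have hlim := (hFA.const_mul
      (2 / (((m : ℝ) - 1) * sphereArea (m + 1)) * ‖x‖ ^ (2 - (m : ℝ))))
    have hfun : (fun t : ℝ => potA1 m t x)
        = fun t : ℝ => 2 / (((m : ℝ) - 1) * sphereArea (m + 1)) * ‖x‖ ^ (2 - (m : ℝ))
            * Fpot (m-2) (‖x‖/t) := rfl
    rw [hfun]
    convert hlim using 2
    -- constants identity
    rw [hsA, hsAm, hGm, hGm1, hpiM1]
    have hm1 : ((m:ℝ) - 1) ≠ 0 := by linarith
    have hm2 : ((m:ℝ) - 2) ≠ 0 := by linarith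
    field_simp
  · -- B part
    intro j
    have hFB : Filter.Tendsto (fun t : ℝ => Fpot m (‖x‖/t))
        (nhdsWithin 0 (Set.Ioi 0))
        (nhds (∫ y in (0:ℝ)..(Real.pi/2), Real.sin y ^ (m-1))) :=
      (Fpot_tendsto m (by omega)).comp hvt
    have ht0 : Filter.Tendsto (fun t : ℝ => t) (nhdsWithin 0 (Set.Ioi 0)) (nhds 0) :=
      (continuous_id.tendsto 0).mono_left nhdsWithin_le_nhds
    have hT1 : Filter.Tendsto
        (fun t : ℝ => 2 / sphereArea (m + 1) * (t * x j / ‖x‖ ^ m) * Fpot m (‖x‖/t))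
        (nhdsWithin 0 (Set.Ioi 0)) (nhds 0) := by
      have h := (ht0.mul hFB).const_mul (2 / sphereArea (m + 1) * (x j / ‖x‖ ^ m))
      simp only [mul_zero, zero_mul] at h
      refine h.congr fun t => ?_
      ring
    have hT2 : Filter.Tendsto
        (fun t : ℝ => 2 / (((m : ℝ) - 1) * sphereArea (m + 1)) * x j
          * (t ^ 2 + ‖x‖ ^ 2) ^ (-(((m : ℝ) - 1) / 2)))
        (nhdsWithin 0 (Set.Ioi 0))
        (nhds (2 / (((m : ℝ) - 1) * sphereArea (m + 1)) * x j
          * ((0:ℝ) ^ 2 + ‖x‖ ^ 2) ^ (-(((m : ℝ) - 1) / 2)))) := by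
      have hc : ContinuousAt
          (fun t : ℝ => (t ^ 2 + ‖x‖ ^ 2) ^ (-(((m : ℝ) - 1) / 2))) 0 := by
        apply ContinuousAt.rpow_const
        · exact ((continuous_pow 2).add continuous_const).continuousAt
        · left
          have : (0:ℝ) < (0:ℝ)^2 + ‖x‖^2 := by positivity
          exact ne_of_gt this
      have hc' : ContinuousAt (fun t : ℝ =>
          2 / (((m : ℝ) - 1) * sphereArea (m + 1)) * x j
            * (t ^ 2 + ‖x‖ ^ 2) ^ (-(((m : ℝ) - 1) / 2))) 0 :=
        continuousAt_const.mul hc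
      exact hc'.continuousWithinAt
    have := hT1.sub hT2
    rw [zero_sub] at this
    have hfun : (fun t : ℝ => potB1 m j t x)
        = fun t : ℝ => 2 / sphereArea (m + 1) * (t * x j / ‖x‖ ^ m) * Fpot m (‖x‖/t)
          - 2 / (((m : ℝ) - 1) * sphereArea (m + 1)) * x j
            * (t ^ 2 + ‖x‖ ^ 2) ^ (-(((m : ℝ) - 1) / 2)) := rfl
    rw [hfun]
    convert this using 2
    have hpow : ((0:ℝ) ^ 2 + ‖x‖ ^ 2) ^ (-(((m : ℝ) - 1) / 2))
        = (‖x‖ ^ (m-1))⁻¹ := by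
      have hcast : (((m-1 : ℕ)):ℝ) = (m:ℝ) - 1 := by
        push_cast [Nat.cast_sub (by omega : 1 ≤ m)]
        ring
      rw [show (0:ℝ)^2 + ‖x‖^2 = ‖x‖^2 by ring,
        ← Real.rpow_natCast ‖x‖ 2, ← Real.rpow_mul hxn.le,
        ← Real.rpow_natCast ‖x‖ (m-1), ← Real.rpow_neg_one,
        ← Real.rpow_mul hxn.le, hcast]
      congr 1
      push_cast
      ring
    rw [hpow]
    ring
end

section
/- Let m ≥ 1 be an integer and let Q_j(t,x) = -(2/σ_{m+1}) x_j (t²+|x|²)^{-(m+1)/2} for j ∈ {1,…,m}. For every Schwartz function φ on ℝ^m and every j, lim_{t → 0+} ∫_{ℝ^m} (∂_t Q_j)(t,x) φ(x) dx = (∂_{x_j} φ)(0). (This is the j-th component of the distributional boundary value b_{-2} = -\underline∂ δ of the downstream harmonic potential B_{-2} = ∂_{x_0} B_{-1}.) -/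
open MeasureTheory

open Real Set Filter

lemma sphereArea_pos_s19 {n : ℕ} (hn : 0 < n) : 0 < sphereArea n := by
  have h1 : (0:ℝ) < (n:ℝ)/2 := by positivity
  have := Real.Gamma_pos_of_pos h1
  unfold sphereArea
  positivity

lemma deriv_poissonQ (m : ℕ) (j : Fin m) {t : ℝ} (ht : 0 < t) (x : EuclideanSpace ℝ (Fin m)) :
    deriv (fun s => poissonQ m j s x) t
      = (2 / sphereArea (m + 1) * ((m : ℝ) + 1)) * t * x j
          * (t ^ 2 + ‖x‖ ^ 2) ^ (-(((m : ℝ) + 3) / 2)) := by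
  have hbase : (0:ℝ) < t ^ 2 + ‖x‖ ^ 2 := by positivity
  have h1 : HasDerivAt (fun s : ℝ => s ^ 2 + ‖x‖ ^ 2) (2 * t) t := by
    simpa using (hasDerivAt_pow 2 t).add_const (‖x‖ ^ 2)
  have h2 : HasDerivAt (fun s : ℝ => (s ^ 2 + ‖x‖ ^ 2) ^ (-(((m : ℝ) + 1) / 2)))
      ((2 * t) * (-(((m : ℝ) + 1) / 2)) * (t ^ 2 + ‖x‖ ^ 2) ^ (-(((m : ℝ) + 1) / 2) - 1)) t :=
    h1.rpow_const (Or.inl hbase.ne')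
  have h3 := (h2.const_mul (-(2 / sphereArea (m + 1)) * x j))
  have : (fun s => poissonQ m j s x)
      = fun s : ℝ => -(2 / sphereArea (m + 1)) * x j * ((s ^ 2 + ‖x‖ ^ 2) ^ (-(((m : ℝ) + 1) / 2))) := by
    funext s; simp [poissonQ, mul_assoc]
  rw [this, h3.deriv]
  have he : -(((m : ℝ) + 1) / 2) - 1 = -(((m : ℝ) + 3) / 2) := by ring
  rw [he]; ring

lemma coord_abs_le_norm {m : ℕ} (y : EuclideanSpace ℝ (Fin m)) (i : Fin m) : |y i| ≤ ‖y‖ := by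
  rw [EuclideanSpace.norm_eq, ← Real.sqrt_sq_eq_abs]
  apply Real.sqrt_le_sqrt
  simp only [Real.norm_eq_abs, sq_abs]
  exact Finset.single_le_sum (f := fun k => y k ^ 2) (fun k _ => sq_nonneg _) (Finset.mem_univ i)


lemma integrable_pow_mul_aux (m : ℕ) {a : ℕ} (ha : a ≤ 2) :
    Integrable (fun y : EuclideanSpace ℝ (Fin m) =>
      ‖y‖ ^ a * (1 + ‖y‖ ^ 2) ^ (-(((m : ℝ) + 3) / 2))) := by
  have hfr : (Module.finrank ℝ (EuclideanSpace ℝ (Fin m)) : ℝ) < (m : ℝ) + 1 := by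
    rw [finrank_euclideanSpace_fin]; linarith
  have hint := (integrable_one_add_norm (E := EuclideanSpace ℝ (Fin m)) (μ := volume) hfr).const_mul
    ((2:ℝ) ^ (((m : ℝ) + 3) / 2))
  refine hint.mono' ?_ (Filter.Eventually.of_forall fun y => ?_)
  · exact ((continuous_norm.pow a).mul ((continuous_const.add (continuous_norm.pow 2)).rpow_const
      (fun y => Or.inl (by simp only [Pi.add_apply, Pi.pow_apply]; positivity)))).aestronglyMeasurable
  · have h0 : (0:ℝ) ≤ ‖y‖ := norm_nonneg y
    have h1 : ((1:ℝ) + ‖y‖ ^ 2) ^ (-(((m : ℝ) + 3) / 2)) ≤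
        2 ^ ((((m:ℝ) + 3)) / 2) * (1 + ‖y‖) ^ (-((m:ℝ) + 3)) := by
      have := rpow_neg_one_add_norm_sq_le (r := (m:ℝ)+3) y (by positivity)
      rwa [neg_div] at this
    have h2 : ‖y‖ ^ a ≤ (1 + ‖y‖) ^ 2 := by
      calc ‖y‖ ^ a ≤ (1 + ‖y‖) ^ a := pow_le_pow_left₀ h0 (by linarith) a
        _ ≤ (1 + ‖y‖) ^ 2 := pow_le_pow_right₀ (by linarith) ha
    rw [Real.norm_eq_abs, abs_of_nonneg (by positivity)]
    calc ‖y‖ ^ a * (1 + ‖y‖ ^ 2) ^ (-(((m : ℝ) + 3) / 2))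
        ≤ (1 + ‖y‖) ^ 2 * (2 ^ ((((m:ℝ) + 3)) / 2) * (1 + ‖y‖) ^ (-((m:ℝ) + 3))) :=
          mul_le_mul h2 h1 (by positivity) (by positivity)
      _ = 2 ^ ((((m:ℝ) + 3)) / 2) * (1 + ‖y‖) ^ (-((m:ℝ) + 1)) := by
          rw [← Real.rpow_natCast (1 + ‖y‖) 2, mul_comm, mul_assoc,
            ← Real.rpow_add (by positivity)]
          congr 1; push_cast; ring

lemma cross_moment_zero (m : ℕ) (i j : Fin m) (hij : i ≠ j) :
    ∫ y : EuclideanSpace ℝ (Fin m), (y j) * (1 + ‖y‖ ^ 2) ^ (-(((m : ℝ) + 3) / 2)) * (y i) = 0 := by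
  set f : EuclideanSpace ℝ (Fin m) → ℝ :=
    fun y => (y j) * (1 + ‖y‖ ^ 2) ^ (-(((m : ℝ) + 3) / 2)) * (y i) with hf
  let T : EuclideanSpace ℝ (Fin m) ≃ₗᵢ[ℝ] EuclideanSpace ℝ (Fin m) :=
    LinearIsometryEquiv.piLpCongrRight 2
      (fun k => if k = i then LinearIsometryEquiv.neg ℝ else LinearIsometryEquiv.refl ℝ ℝ)
  have hT : ∀ y, f (T y) = -f y := by
    intro y
    have hTi : T y i = -(y i) := by
      simp [T, LinearIsometryEquiv.piLpCongrRight_apply]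
    have hTj : T y j = y j := by
      simp [T, LinearIsometryEquiv.piLpCongrRight_apply, hij.symm]
    have hTn : ‖T y‖ = ‖y‖ := T.norm_map y
    simp only [hf, hTi, hTj, hTn]; ring
  have h1 : ∫ y, f (T y) = ∫ y, f y :=
    T.measurePreserving.integral_comp T.toHomeomorph.measurableEmbedding f
  have h2 : ∫ y, f (T y) = -∫ y, f y := by
    simp_rw [hT]; exact integral_neg f
  linarith

lemma int_gauss_sq {t : ℝ} (ht : 0 < t) :
    ∫ u : ℝ, u ^ 2 * rexp (-(t * u ^ 2)) = t ^ (-(3:ℝ)/2) * Real.Gamma (3/2) := by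
  have h := integral_rpow_mul_exp_neg_mul_rpow (p := 2) (q := 2) (by norm_num) (by norm_num) ht
  have heq : ∫ u : ℝ, u ^ 2 * rexp (-(t * u ^ 2))
      = 2 * ∫ x in Ioi (0:ℝ), x ^ 2 * rexp (-(t * x ^ 2)) := by
    rw [← integral_comp_abs (f := fun x => x ^ 2 * rexp (-(t * x ^ 2)))]
    congr 1; funext u; rw [sq_abs]
  have h2 : ∫ x in Ioi (0:ℝ), x ^ 2 * rexp (-(t * x ^ 2))
      = ∫ x in Ioi (0:ℝ), x ^ (2:ℝ) * rexp (-t * x ^ (2:ℝ)) := by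
    congr 1; funext x
    rw [← Real.rpow_natCast x 2]; norm_num [neg_mul]
  rw [heq, h2, h]
  rw [show (-((2:ℝ) + 1) / 2) = -(3:ℝ)/2 by norm_num, show ((2:ℝ) + 1) / 2 = (3:ℝ)/2 by norm_num]
  ring

lemma int_gauss {t : ℝ} (ht : 0 < t) :
    ∫ u : ℝ, rexp (-(t * u ^ 2)) = Real.sqrt (π / t) := by
  rw [← integral_gaussian t]; congr 1; funext u; rw [neg_mul]

lemma gaussian_moment {m : ℕ} (j : Fin m) {t : ℝ} (ht : 0 < t) :
    ∫ y : EuclideanSpace ℝ (Fin m), (y j) ^ 2 * rexp (-(t * ‖y‖ ^ 2))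
      = (t ^ (-(3:ℝ)/2) * Real.Gamma (3/2)) * Real.sqrt (π / t) ^ (m - 1) := by
  have hMP := (EuclideanSpace.volume_preserving_symm_measurableEquiv_toLp (Fin m)).symm
  rw [← hMP.integral_comp (MeasurableEquiv.measurableEmbedding _)
    (fun y => (y j) ^ 2 * rexp (-(t * ‖y‖ ^ 2)))]
  have hstep : ∀ v : Fin m → ℝ,
      ((MeasurableEquiv.toLp 2 (Fin m → ℝ)).symm.symm v j) ^ 2
        * rexp (-(t * ‖(MeasurableEquiv.toLp 2 (Fin m → ℝ)).symm.symm v‖ ^ 2))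
      = ∏ k, ((if k = j then (v k) ^ 2 else 1) * rexp (-(t * (v k) ^ 2))) := by
    intro v
    have hnorm : ‖(MeasurableEquiv.toLp 2 (Fin m → ℝ)).symm.symm v‖ ^ 2 = ∑ k, (v k) ^ 2 := by
      simp only [MeasurableEquiv.symm_symm, MeasurableEquiv.toLp_apply,
        EuclideanSpace.norm_eq, Real.norm_eq_abs, sq_abs]
      rw [Real.sq_sqrt]
      · exact Finset.sum_nonneg fun k _ => sq_nonneg _
    have hcoord : (MeasurableEquiv.toLp 2 (Fin m → ℝ)).symm.symm v j = v j := rfl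
    rw [hcoord, hnorm, Finset.prod_mul_distrib, Finset.prod_ite_eq' Finset.univ j
      (fun k => (v k) ^ 2), ← Real.exp_sum]
    simp [Finset.mul_sum]
  simp_rw [hstep]
  rw [volume_pi, MeasureTheory.integral_fintype_prod_eq_prod
    (f := fun k u => (if k = j then u ^ 2 else 1) * rexp (-(t * u ^ 2)))]
  rw [← Finset.mul_prod_erase Finset.univ _ (Finset.mem_univ j)]
  have hj : ∫ u : ℝ, (if j = j then u ^ 2 else 1) * rexp (-(t * u ^ 2))
      = t ^ (-(3:ℝ)/2) * Real.Gamma (3/2) := by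
    simp only [if_pos rfl]; exact int_gauss_sq ht
  have hk : ∀ k ∈ Finset.univ.erase j, (∫ u : ℝ, (if k = j then u ^ 2 else 1) * rexp (-(t * u ^ 2)))
      = Real.sqrt (π / t) := by
    intro k hk
    rw [Finset.mem_erase] at hk
    simp only [if_neg hk.1, one_mul]
    exact int_gauss ht
  rw [hj, Finset.prod_congr rfl hk, Finset.prod_const, Finset.card_erase_of_mem (Finset.mem_univ j),
    Finset.card_univ, Fintype.card_fin]

lemma integrable_of_le_aux {m : ℕ} {f : EuclideanSpace ℝ (Fin m) → ℝ}
    (hf : AEStronglyMeasurable f (volume : Measure (EuclideanSpace ℝ (Fin m)))) (c : ℝ) {a : ℕ}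
    (ha : a ≤ 2)
    (h : ∀ y, |f y| ≤ c * (‖y‖ ^ a * (1 + ‖y‖ ^ 2) ^ (-(((m : ℝ) + 3) / 2)))) :
    Integrable f :=
  ((integrable_pow_mul_aux m ha).const_mul c).mono' hf (Filter.Eventually.of_forall h)

lemma cont_rs (m : ℕ) : Continuous fun y : EuclideanSpace ℝ (Fin m) =>
    (1 + ‖y‖ ^ 2) ^ (-(((m : ℝ) + 3) / 2)) :=
  (continuous_const.add (continuous_norm.pow 2)).rpow_const (fun y => Or.inl (by simp only [Pi.add_apply, Pi.pow_apply]; positivity))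

lemma moment_eq {m : ℕ} (j : Fin m) :
    ∫ y : EuclideanSpace ℝ (Fin m), (y j) ^ 2 * (1 + ‖y‖ ^ 2) ^ (-(((m : ℝ) + 3) / 2))
      = π ^ (((m : ℝ) + 1) / 2) / (2 * Real.Gamma (((m : ℝ) + 3) / 2)) := by
  have hm : 1 ≤ m := j.pos
  set s : ℝ := ((m : ℝ) + 3) / 2 with hs_def
  have hs1 : (0:ℝ) < s := by positivity
  have hsm : (0:ℝ) < s - 1 := by
    rw [hs_def]; have : (0:ℝ) ≤ (m:ℝ) := Nat.cast_nonneg m; linarith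
  have hΓpos : 0 < Real.Gamma s := Real.Gamma_pos_of_pos hs1
  set H : EuclideanSpace ℝ (Fin m) → ℝ → ℝ :=
    fun y t => (y j) ^ 2 * (t ^ (s - 1) * rexp (-((1 + ‖y‖ ^ 2) * t))) with hH_def
  -- inner integral in t
  have hinner : ∀ y : EuclideanSpace ℝ (Fin m),
      ∫ t in Ioi (0:ℝ), H y t = Real.Gamma s * ((y j) ^ 2 * (1 + ‖y‖ ^ 2) ^ (-s)) := by
    intro y
    have hr : (0:ℝ) < 1 + ‖y‖ ^ 2 := by positivity
    rw [MeasureTheory.integral_const_mul, integral_rpow_mul_exp_neg_mul_Ioi hs1 hr,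
      one_div, Real.inv_rpow hr.le, ← Real.rpow_neg hr.le]
    ring
  -- nonnegativity of H on Ioi
  have hHnn : ∀ y : EuclideanSpace ℝ (Fin m), ∀ t ∈ Ioi (0:ℝ), 0 ≤ H y t := by
    intro y t ht
    have := Real.rpow_nonneg (le_of_lt (mem_Ioi.1 ht)) (s - 1)
    positivity
  -- continuity of H as a function on the product
  have hHcont : Continuous (Function.uncurry H) := by
    apply Continuous.mul
    · exact (((EuclideanSpace.proj j).continuous.comp continuous_fst).pow 2)
    · apply Continuous.mul
      · exact (Real.continuous_rpow_const hsm.le).comp continuous_snd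
      · exact (Real.continuous_exp.comp
          (((continuous_const.add ((continuous_norm.comp continuous_fst).pow 2)).mul
            continuous_snd).neg))
  -- integrability of slices
  have hslice : ∀ y : EuclideanSpace ℝ (Fin m),
      Integrable (fun t => H y t) ((volume : Measure ℝ).restrict (Ioi 0)) := by
    intro y
    have hg : IntegrableOn (fun t : ℝ => rexp (-t) * t ^ (s - 1)) (Ioi 0) :=
      Real.GammaIntegral_convergent hs1
    refine ((hg.const_mul ((y j) ^ 2)).mono' ?_ ?_)
    · exact (hHcont.comp (Continuous.prodMk_right y)).aestronglyMeasurable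
    · rw [MeasureTheory.ae_restrict_iff' measurableSet_Ioi]
      refine Filter.Eventually.of_forall fun t ht => ?_
      have ht0 : (0:ℝ) < t := mem_Ioi.1 ht
      rw [Real.norm_eq_abs, abs_of_nonneg (hHnn y t ht)]
      have hexp : rexp (-((1 + ‖y‖ ^ 2) * t)) ≤ rexp (-t) := by
        apply Real.exp_le_exp.2
        have : t ≤ (1 + ‖y‖ ^ 2) * t := by nlinarith [sq_nonneg ‖y‖]
        linarith
      have h1 : H y t ≤ (y j) ^ 2 * (t ^ (s - 1) * rexp (-t)) := by
        apply mul_le_mul_of_nonneg_left _ (sq_nonneg _)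
        exact mul_le_mul_of_nonneg_left hexp (Real.rpow_nonneg ht0.le _)
      calc H y t ≤ (y j) ^ 2 * (t ^ (s - 1) * rexp (-t)) := h1
        _ = (y j) ^ 2 * (rexp (-t) * t ^ (s - 1)) := by ring
  -- integrability of the norm integral
  have hcore : Integrable (fun y : EuclideanSpace ℝ (Fin m) =>
      Real.Gamma s * ((y j) ^ 2 * (1 + ‖y‖ ^ 2) ^ (-s))) := by
    apply integrable_of_le_aux ?_ (Real.Gamma s) (le_refl 2)
    · intro y
      have h1 : |y j| ≤ ‖y‖ := coord_abs_le_norm y j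
      have h2 : (y j) ^ 2 ≤ ‖y‖ ^ 2 := by
        rw [← sq_abs]; exact pow_le_pow_left₀ (abs_nonneg _) h1 2
      have h3 : (0:ℝ) ≤ (1 + ‖y‖ ^ 2) ^ (-s) := Real.rpow_nonneg (by positivity) _
      rw [abs_of_nonneg (by positivity)]
      calc Real.Gamma s * ((y j) ^ 2 * (1 + ‖y‖ ^ 2) ^ (-s))
          ≤ Real.Gamma s * (‖y‖ ^ 2 * (1 + ‖y‖ ^ 2) ^ (-s)) := by
            apply mul_le_mul_of_nonneg_left _ hΓpos.le
            exact mul_le_mul_of_nonneg_right h2 h3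
        _ = Real.Gamma s * (‖y‖ ^ 2 * (1 + ‖y‖ ^ 2) ^ (-(((m : ℝ) + 3) / 2))) := by rw [hs_def]
    · exact (continuous_const.mul (((EuclideanSpace.proj j).continuous.pow 2).mul
        (cont_rs m))).aestronglyMeasurable
  have hprod : Integrable (Function.uncurry H)
      ((volume : Measure (EuclideanSpace ℝ (Fin m))).prod ((volume : Measure ℝ).restrict (Ioi 0))) := by
    refine (MeasureTheory.integrable_prod_iff hHcont.aestronglyMeasurable).2 ⟨?_, ?_⟩
    · exact Filter.Eventually.of_forall hslice
    · have hnormint : ∀ y : EuclideanSpace ℝ (Fin m),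
          (∫ t in Ioi (0:ℝ), ‖Function.uncurry H (y, t)‖)
          = Real.Gamma s * ((y j) ^ 2 * (1 + ‖y‖ ^ 2) ^ (-s)) := by
        intro y
        rw [← hinner y]
        refine setIntegral_congr_fun measurableSet_Ioi fun t ht => ?_
        rw [Real.norm_eq_abs]; exact abs_of_nonneg (hHnn y t ht)
      simpa only [hnormint] using hcore
  have hswap := MeasureTheory.integral_integral_swap hprod
  have hLHS : ∫ y : EuclideanSpace ℝ (Fin m), ∫ t in Ioi (0:ℝ), H y t
      = Real.Gamma s * ∫ y : EuclideanSpace ℝ (Fin m), (y j) ^ 2 * (1 + ‖y‖ ^ 2) ^ (-s) := by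
    simp_rw [hinner]; exact MeasureTheory.integral_const_mul _ _
  have hpt : ∀ t ∈ Ioi (0:ℝ), (∫ y : EuclideanSpace ℝ (Fin m), H y t)
      = (Real.Gamma (3/2) * π ^ (((m:ℝ)-1)/2)) * (t ^ ((1:ℝ)/2 - 1) * rexp (-((1:ℝ) * t))) := by
    intro t ht
    have ht0 : (0:ℝ) < t := mem_Ioi.1 ht
    have hHy : ∀ y : EuclideanSpace ℝ (Fin m), H y t
        = (t ^ (s - 1) * rexp (-t)) * ((y j) ^ 2 * rexp (-(t * ‖y‖ ^ 2))) := by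
      intro y
      have hsplit : rexp (-((1 + ‖y‖ ^ 2) * t)) = rexp (-t) * rexp (-(t * ‖y‖ ^ 2)) := by
        rw [← Real.exp_add]; congr 1; ring
      rw [hH_def]; dsimp only; rw [hsplit]; ring
    simp_rw [hHy]
    rw [MeasureTheory.integral_const_mul, gaussian_moment j ht0]
    have h1 : Real.sqrt (π/t) ^ (m-1) = π ^ (((m:ℝ)-1)/2) * t ^ (-(((m:ℝ)-1)/2)) := by
      rw [Real.sqrt_eq_rpow, ← Real.rpow_natCast ((π/t) ^ ((1:ℝ)/2)) (m-1),
        ← Real.rpow_mul (by positivity)]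
      rw [Real.div_rpow pi_pos.le ht0.le, Real.rpow_neg ht0.le, div_eq_mul_inv]
      congr 2 <;> (rw [Nat.cast_sub hm, Nat.cast_one]; ring)
    rw [h1, show (-((1:ℝ)*t)) = -t by ring]
    have hc : t ^ (s-1) * (t ^ (-(3:ℝ)/2) * t ^ (-(((m:ℝ)-1)/2))) = t ^ ((1:ℝ)/2 - 1) := by
      rw [← Real.rpow_add ht0, ← Real.rpow_add ht0]
      congr 1
      rw [hs_def]; push_cast; ring
    rw [← hc]; ring
  have hRHS : ∫ t in Ioi (0:ℝ), ∫ y : EuclideanSpace ℝ (Fin m), H y t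
      = (Real.Gamma (3/2) * π ^ (((m:ℝ)-1)/2)) * Real.Gamma (1/2) := by
    rw [setIntegral_congr_fun measurableSet_Ioi hpt, MeasureTheory.integral_const_mul,
      integral_rpow_mul_exp_neg_mul_Ioi (by norm_num) (by norm_num)]
    norm_num
  have key : Real.Gamma s * (∫ y : EuclideanSpace ℝ (Fin m), (y j) ^ 2 * (1 + ‖y‖ ^ 2) ^ (-s))
      = (Real.Gamma (3/2) * π ^ (((m:ℝ)-1)/2)) * Real.Gamma (1/2) := by
    rw [← hLHS, hswap, hRHS]
  have hG32 : Real.Gamma (3/2) = (1/2) * Real.sqrt π := by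
    rw [show (3/2 : ℝ) = 1/2 + 1 by norm_num, Real.Gamma_add_one (by norm_num),
      Real.Gamma_one_half_eq]
  have hππ : Real.sqrt π * Real.sqrt π = π := Real.mul_self_sqrt pi_pos.le
  have hpow : π ^ (((m:ℝ)-1)/2) * π = π ^ (((m:ℝ)+1)/2) := by
    nth_rewrite 2 [← Real.rpow_one π]
    rw [← Real.rpow_add pi_pos]; congr 1; ring
  have hval : (Real.Gamma (3/2) * π ^ (((m:ℝ)-1)/2)) * Real.Gamma (1/2)
      = π ^ (((m:ℝ)+1)/2) / 2 := by
    rw [hG32, Real.Gamma_one_half_eq, ← hpow]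
    linear_combination (π ^ (((m:ℝ)-1)/2)/2) * hππ
  rw [show -(((m:ℝ) + 3) / 2) = -s by rw [hs_def]]
  rw [eq_div_iff (by positivity)]
  rw [hval] at key
  linarith [key]

lemma moment_one {m : ℕ} (j : Fin m) :
    (2 / sphereArea (m + 1) * ((m : ℝ) + 1))
      * ∫ y : EuclideanSpace ℝ (Fin m), (y j) ^ 2 * (1 + ‖y‖ ^ 2) ^ (-(((m : ℝ) + 3) / 2))
      = 1 := by
  rw [moment_eq j]
  have hcast : ((m + 1 : ℕ) : ℝ) = (m : ℝ) + 1 := by push_cast; ring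
  have hG1 : 0 < Real.Gamma (((m:ℝ)+1)/2) := Real.Gamma_pos_of_pos (by positivity)
  have hG3 : Real.Gamma (((m:ℝ)+3)/2) = (((m:ℝ)+1)/2) * Real.Gamma (((m:ℝ)+1)/2) := by
    rw [show ((m:ℝ)+3)/2 = ((m:ℝ)+1)/2 + 1 by ring, Real.Gamma_add_one (by positivity)]
  have hπ : (0:ℝ) < π ^ (((m:ℝ)+1)/2) := Real.rpow_pos_of_pos pi_pos _
  rw [sphereArea, hcast, hG3]
  field_simp

lemma scaling {m : ℕ} (j : Fin m) (C : ℝ) (φ : EuclideanSpace ℝ (Fin m) → ℝ) {t : ℝ}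
    (ht : 0 < t) :
    ∫ x : EuclideanSpace ℝ (Fin m),
        C * t * x j * (t ^ 2 + ‖x‖ ^ 2) ^ (-(((m : ℝ) + 3) / 2)) * φ x
      = ∫ y : EuclideanSpace ℝ (Fin m),
          C * y j * (1 + ‖y‖ ^ 2) ^ (-(((m : ℝ) + 3) / 2)) * (φ (t • y) / t) := by
  set F : EuclideanSpace ℝ (Fin m) → ℝ :=
    fun x => C * t * x j * (t ^ 2 + ‖x‖ ^ 2) ^ (-(((m : ℝ) + 3) / 2)) * φ x with hF
  have h1 := MeasureTheory.Measure.integral_comp_smul_of_nonneg (volume) F t (hR := ht.le)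
  rw [finrank_euclideanSpace_fin] at h1
  have htm : (0:ℝ) < t ^ m := pow_pos ht m
  have h2 : ∫ x, F x = t ^ m * ∫ x, F (t • x) := by
    rw [h1, smul_eq_mul, ← mul_assoc, mul_inv_cancel₀ htm.ne', one_mul]
  rw [h2, ← MeasureTheory.integral_const_mul]
  congr 1; funext y
  have hsm : (t • y) j = t * y j := rfl
  have hnorm : ‖t • y‖ ^ 2 = t ^ 2 * ‖y‖ ^ 2 := by
    rw [norm_smul, Real.norm_eq_abs, mul_pow, sq_abs]
  have hbase : t ^ 2 + ‖t • y‖ ^ 2 = t ^ 2 * (1 + ‖y‖ ^ 2) := by rw [hnorm]; ring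
  have hrp : (t ^ 2 * (1 + ‖y‖ ^ 2)) ^ (-(((m:ℝ)+3)/2))
      = (t ^ (m + 3 : ℕ))⁻¹ * (1 + ‖y‖ ^ 2) ^ (-(((m:ℝ)+3)/2)) := by
    rw [Real.mul_rpow (sq_nonneg t) (by positivity)]
    congr 1
    rw [← Real.rpow_natCast t 2, ← Real.rpow_mul ht.le,
      show ((2:ℕ):ℝ) * (-(((m:ℝ)+3)/2)) = -((m:ℝ)+3) by push_cast; ring,
      Real.rpow_neg ht.le, show ((m:ℝ)+3) = ((m+3:ℕ):ℝ) by push_cast; ring,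
      Real.rpow_natCast]
  rw [hF]
  dsimp only
  rw [hsm, hbase, hrp]
  have hpow : (t:ℝ) ^ (m + 3 : ℕ) = t ^ m * t ^ 3 := by rw [pow_add]
  field_simp
  ring

lemma schwartz_fderiv_bound {m : ℕ} (φ : SchwartzMap (EuclideanSpace ℝ (Fin m)) ℝ) :
    ∃ M : ℝ, 0 ≤ M ∧ ∀ x, ‖fderiv ℝ (⇑φ) x‖ ≤ M := by
  obtain ⟨C, hCpos, hC⟩ := (SchwartzMap.fderivCLM ℝ _ _ φ).decay 0 0
  refine ⟨C, hCpos.le, fun x => ?_⟩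
  have := hC x
  simp only [pow_zero, one_mul, norm_iteratedFDeriv_zero,
    SchwartzMap.fderivCLM_apply] at this
  exact this

lemma integral_k_zero {m : ℕ} (j : Fin m) (C : ℝ) :
    ∫ y : EuclideanSpace ℝ (Fin m), C * y j * (1 + ‖y‖ ^ 2) ^ (-(((m : ℝ) + 3) / 2)) = 0 := by
  set k : EuclideanSpace ℝ (Fin m) → ℝ :=
    fun y => C * y j * (1 + ‖y‖ ^ 2) ^ (-(((m : ℝ) + 3) / 2)) with hk
  have hodd : ∀ y, k (-y) = -k y := by
    intro y
    have h1 : (-y) j = -(y j) := rfl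
    have h2 : ‖(-y : EuclideanSpace ℝ (Fin m))‖ = ‖y‖ := norm_neg y
    simp only [hk, h1, h2]; ring
  have h1 : ∫ y, k (-y) = ∫ y, k y := MeasureTheory.integral_neg_eq_self k volume
  have h2 : ∫ y, k (-y) = -∫ y, k y := by simp_rw [hodd]; exact integral_neg k
  linarith

lemma cont_k {m : ℕ} (j : Fin m) (C : ℝ) :
    Continuous fun y : EuclideanSpace ℝ (Fin m) =>
      C * y j * (1 + ‖y‖ ^ 2) ^ (-(((m : ℝ) + 3) / 2)) :=
  (continuous_const.mul (EuclideanSpace.proj j).continuous).mul (cont_rs m)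

lemma integrable_k_mul_coord {m : ℕ} (j i : Fin m) (C : ℝ) :
    Integrable (fun y : EuclideanSpace ℝ (Fin m) =>
      C * y j * (1 + ‖y‖ ^ 2) ^ (-(((m : ℝ) + 3) / 2)) * y i) := by
  apply integrable_of_le_aux
    (((cont_k j C).mul (EuclideanSpace.proj i).continuous).aestronglyMeasurable) |C| (le_refl 2)
  intro y
  have hA : (0:ℝ) ≤ (1 + ‖y‖ ^ 2) ^ (-(((m:ℝ)+3)/2)) := Real.rpow_nonneg (by positivity) _
  have h1 : |y j| ≤ ‖y‖ := coord_abs_le_norm y j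
  have h2 : |y i| ≤ ‖y‖ := coord_abs_le_norm y i
  calc |C * y j * (1 + ‖y‖ ^ 2) ^ (-(((m:ℝ)+3)/2)) * y i|
      = |C| * |y j| * (1 + ‖y‖ ^ 2) ^ (-(((m:ℝ)+3)/2)) * |y i| := by
        rw [abs_mul, abs_mul, abs_mul, abs_of_nonneg hA]
    _ ≤ |C| * ‖y‖ * (1 + ‖y‖ ^ 2) ^ (-(((m:ℝ)+3)/2)) * ‖y‖ := by gcongr
    _ = |C| * (‖y‖ ^ 2 * (1 + ‖y‖ ^ 2) ^ (-(((m:ℝ)+3)/2))) := by ring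

lemma integrable_k {m : ℕ} (j : Fin m) (C : ℝ) :
    Integrable (fun y : EuclideanSpace ℝ (Fin m) =>
      C * y j * (1 + ‖y‖ ^ 2) ^ (-(((m : ℝ) + 3) / 2))) := by
  apply integrable_of_le_aux (cont_k j C).aestronglyMeasurable |C|
    (show (1:ℕ) ≤ 2 by norm_num)
  intro y
  have hA : (0:ℝ) ≤ (1 + ‖y‖ ^ 2) ^ (-(((m:ℝ)+3)/2)) := Real.rpow_nonneg (by positivity) _
  have h1 : |y j| ≤ ‖y‖ := coord_abs_le_norm y j
  calc |C * y j * (1 + ‖y‖ ^ 2) ^ (-(((m:ℝ)+3)/2))|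
      = |C| * |y j| * (1 + ‖y‖ ^ 2) ^ (-(((m:ℝ)+3)/2)) := by
        rw [abs_mul, abs_mul, abs_of_nonneg hA]
    _ ≤ |C| * ‖y‖ * (1 + ‖y‖ ^ 2) ^ (-(((m:ℝ)+3)/2)) := by gcongr
    _ = |C| * (‖y‖ ^ 1 * (1 + ‖y‖ ^ 2) ^ (-(((m:ℝ)+3)/2))) := by ring

lemma limit_value {m : ℕ} (j : Fin m) (φ : SchwartzMap (EuclideanSpace ℝ (Fin m)) ℝ) :
    ∫ y : EuclideanSpace ℝ (Fin m),
        (2 / sphereArea (m + 1) * ((m : ℝ) + 1)) * y j * (1 + ‖y‖ ^ 2) ^ (-(((m : ℝ) + 3) / 2))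
          * ((fderiv ℝ (⇑φ) 0) y)
      = (fderiv ℝ (⇑φ) 0) (EuclideanSpace.single j (1 : ℝ)) := by
  set C : ℝ := 2 / sphereArea (m + 1) * ((m : ℝ) + 1) with hC
  set D := fderiv ℝ (⇑φ) 0 with hD
  have hy : ∀ y : EuclideanSpace ℝ (Fin m), y = ∑ i, y i • EuclideanSpace.single i (1:ℝ) := by
    intro y
    ext kk
    rw [show (∑ i, y i • EuclideanSpace.single i (1:ℝ)) kk
        = ∑ i, (y i • EuclideanSpace.single i (1:ℝ)) kk by rw [WithLp.ofLp_sum, Finset.sum_apply]]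
    simp [EuclideanSpace.single_apply]
  have hDy : ∀ y, D y = ∑ i, y i * D (EuclideanSpace.single i (1:ℝ)) := by
    intro y
    conv_lhs => rw [hy y]
    rw [map_sum]
    refine Finset.sum_congr rfl fun i _ => ?_
    rw [_root_.map_smul, smul_eq_mul]
  have hint : ∀ y : EuclideanSpace ℝ (Fin m),
      C * y j * (1 + ‖y‖ ^ 2) ^ (-(((m:ℝ)+3)/2)) * D y
      = ∑ i, (C * y j * (1 + ‖y‖ ^ 2) ^ (-(((m:ℝ)+3)/2)) * y i)
          * D (EuclideanSpace.single i (1:ℝ)) := by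
    intro y
    rw [hDy y, Finset.mul_sum]
    refine Finset.sum_congr rfl fun i _ => ?_
    ring
  simp_rw [hint]
  rw [MeasureTheory.integral_finset_sum Finset.univ
    (fun i _ => (integrable_k_mul_coord j i C).mul_const _)]
  rw [Finset.sum_eq_single j (fun i _ hij => ?_) (fun h => absurd (Finset.mem_univ j) h)]
  · rw [MeasureTheory.integral_mul_const]
    have h0 : (fun y : EuclideanSpace ℝ (Fin m) =>
        C * y j * (1 + ‖y‖ ^ 2) ^ (-(((m:ℝ)+3)/2)) * y j)
        = fun y : EuclideanSpace ℝ (Fin m) =>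
          C * ((y j) ^ 2 * (1 + ‖y‖ ^ 2) ^ (-(((m:ℝ)+3)/2))) := by
      funext y; ring
    rw [h0, MeasureTheory.integral_const_mul, hC, moment_one j, one_mul]
  · rw [MeasureTheory.integral_mul_const]
    have h0 : (fun y : EuclideanSpace ℝ (Fin m) =>
        C * y j * (1 + ‖y‖ ^ 2) ^ (-(((m:ℝ)+3)/2)) * y i)
        = fun y : EuclideanSpace ℝ (Fin m) =>
          C * (y j * (1 + ‖y‖ ^ 2) ^ (-(((m:ℝ)+3)/2)) * y i) := by
      funext y; ring
    rw [h0, MeasureTheory.integral_const_mul, cross_moment_zero m i j hij]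
    ring

theorem B_minus2_boundary_value
    (m : ℕ) (hm : 1 ≤ m) (j : Fin m) (φ : SchwartzMap (EuclideanSpace ℝ (Fin m)) ℝ) :
    Filter.Tendsto (fun t : ℝ =>
        ∫ x : EuclideanSpace ℝ (Fin m), deriv (fun s => poissonQ m j s x) t * φ x)
      (nhdsWithin 0 (Set.Ioi 0))
      (nhds (fderiv ℝ (fun y => φ y) 0 (EuclideanSpace.single j (1 : ℝ)))) := by

  set C : ℝ := 2 / sphereArea (m + 1) * ((m : ℝ) + 1) with hC
  set k : EuclideanSpace ℝ (Fin m) → ℝ :=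
    fun y => C * y j * (1 + ‖y‖ ^ 2) ^ (-(((m : ℝ) + 3) / 2)) with hk
  obtain ⟨M, hM0, hM⟩ := schwartz_fderiv_bound φ
  have hdiff : ∀ (t : ℝ) (y : EuclideanSpace ℝ (Fin m)),
      |φ (t • y) - φ 0| ≤ M * (|t| * ‖y‖) := by
    intro t y
    have h := Convex.norm_image_sub_le_of_norm_fderiv_le (f := ⇑φ) (C := M) (s := Set.univ)
      (fun x _ => φ.differentiable.differentiableAt)
      (fun x _ => hM x) convex_univ (Set.mem_univ 0) (Set.mem_univ (t • y))
    rw [sub_zero, norm_smul, Real.norm_eq_abs] at h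
    exact h
  have hknorm : ∀ y : EuclideanSpace ℝ (Fin m),
      |k y| ≤ |C| * ‖y‖ * (1 + ‖y‖ ^ 2) ^ (-(((m : ℝ) + 3) / 2)) := by
    intro y
    have hA : (0:ℝ) ≤ (1 + ‖y‖ ^ 2) ^ (-(((m:ℝ)+3)/2)) := Real.rpow_nonneg (by positivity) _
    calc |k y| = |C| * |y j| * (1 + ‖y‖ ^ 2) ^ (-(((m:ℝ)+3)/2)) := by
          rw [hk]; rw [abs_mul, abs_mul, abs_of_nonneg hA]
      _ ≤ |C| * ‖y‖ * (1 + ‖y‖ ^ 2) ^ (-(((m:ℝ)+3)/2)) := by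
          gcongr; exact coord_abs_le_norm y j
  have hmeasG : ∀ t : ℝ, AEStronglyMeasurable
      (fun y : EuclideanSpace ℝ (Fin m) => k y * ((φ (t • y) - φ 0) / t)) volume := by
    intro t
    apply Continuous.aestronglyMeasurable
    exact (cont_k j C).mul
      (((φ.continuous.comp (continuous_id.const_smul t)).sub continuous_const).div_const t)
  have hboundG : ∀ t ∈ Set.Ioi (0:ℝ), ∀ y : EuclideanSpace ℝ (Fin m),
      |k y * ((φ (t • y) - φ 0) / t)|
        ≤ (M * |C|) * (‖y‖ ^ 2 * (1 + ‖y‖ ^ 2) ^ (-(((m : ℝ) + 3) / 2))) := by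
    intro t ht y
    have ht0 : (0:ℝ) < t := ht
    have hA : (0:ℝ) ≤ (1 + ‖y‖ ^ 2) ^ (-(((m:ℝ)+3)/2)) := Real.rpow_nonneg (by positivity) _
    have h1 : |φ (t • y) - φ 0| / t ≤ M * ‖y‖ := by
      rw [div_le_iff₀ ht0]
      calc |φ (t • y) - φ 0| ≤ M * (|t| * ‖y‖) := hdiff t y
        _ = M * ‖y‖ * t := by rw [abs_of_pos ht0]; ring
    have h2 : |k y * ((φ (t • y) - φ 0) / t)| = |k y| * (|φ (t • y) - φ 0| / t) := by
      rw [abs_mul, abs_div, abs_of_pos ht0]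
    rw [h2]
    calc |k y| * (|φ (t • y) - φ 0| / t)
        ≤ (|C| * ‖y‖ * (1 + ‖y‖ ^ 2) ^ (-(((m:ℝ)+3)/2))) * (M * ‖y‖) :=
          mul_le_mul (hknorm y) h1 (by positivity) (by positivity)
      _ = (M * |C|) * (‖y‖ ^ 2 * (1 + ‖y‖ ^ 2) ^ (-(((m:ℝ)+3)/2))) := by ring
  have hbound_int : Integrable (fun y : EuclideanSpace ℝ (Fin m) =>
      (M * |C|) * (‖y‖ ^ 2 * (1 + ‖y‖ ^ 2) ^ (-(((m:ℝ)+3)/2)))) :=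
    (integrable_pow_mul_aux m (le_refl 2)).const_mul _
  have hlim : ∀ y : EuclideanSpace ℝ (Fin m),
      Filter.Tendsto (fun t : ℝ => k y * ((φ (t • y) - φ 0) / t)) (nhdsWithin 0 (Set.Ioi 0))
        (nhds (k y * ((fderiv ℝ (⇑φ) 0) y))) := by
    intro y
    have h1 : HasDerivAt (fun t : ℝ => t • y) y 0 := by
      simpa using (hasDerivAt_id (0:ℝ)).smul_const y
    have h2 : HasFDerivAt (⇑φ) (fderiv ℝ (⇑φ) 0) ((0:ℝ) • y) := by
      rw [zero_smul]
      exact φ.differentiable.differentiableAt.hasFDerivAt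
    have h3 : HasDerivAt (fun t : ℝ => φ (t • y)) ((fderiv ℝ (⇑φ) 0) y) 0 :=
      h2.comp_hasDerivAt 0 h1
    rw [hasDerivAt_iff_tendsto_slope] at h3
    have h4 : Filter.Tendsto (slope (fun t : ℝ => φ (t • y)) 0) (nhdsWithin 0 (Set.Ioi 0))
        (nhds ((fderiv ℝ (⇑φ) 0) y)) :=
      h3.mono_left (nhdsWithin_mono 0 (fun x hx =>
        Set.mem_compl_singleton_iff.2 (ne_of_gt (Set.mem_Ioi.1 hx))))
    have h5 : ∀ t : ℝ, slope (fun t : ℝ => φ (t • y)) 0 t = (φ (t • y) - φ 0) / t := by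
      intro t
      rw [slope_def_field]
      rw [sub_zero, zero_smul]
    exact ((h4.congr h5).const_mul (k y))
  have htendI : Filter.Tendsto
      (fun t : ℝ => ∫ y : EuclideanSpace ℝ (Fin m), k y * ((φ (t • y) - φ 0) / t))
      (nhdsWithin 0 (Set.Ioi 0))
      (nhds (∫ y : EuclideanSpace ℝ (Fin m), k y * ((fderiv ℝ (⇑φ) 0) y))) := by
    apply MeasureTheory.tendsto_integral_filter_of_dominated_convergence
      (bound := fun y => (M * |C|) * (‖y‖ ^ 2 * (1 + ‖y‖ ^ 2) ^ (-(((m:ℝ)+3)/2))))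
    · exact Filter.Eventually.of_forall hmeasG
    · filter_upwards [self_mem_nhdsWithin] with t ht
      exact MeasureTheory.ae_of_all _ fun y => by
        rw [Real.norm_eq_abs]; exact hboundG t ht y
    · exact hbound_int
    · exact MeasureTheory.ae_of_all _ hlim
  have heq : ∀ᶠ t in nhdsWithin (0:ℝ) (Set.Ioi 0),
      (∫ x : EuclideanSpace ℝ (Fin m), deriv (fun s => poissonQ m j s x) t * φ x)
        = ∫ y : EuclideanSpace ℝ (Fin m), k y * ((φ (t • y) - φ 0) / t) := by
    filter_upwards [self_mem_nhdsWithin] with t ht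
    have ht0 : (0:ℝ) < t := ht
    have e1 : (∫ x : EuclideanSpace ℝ (Fin m), deriv (fun s => poissonQ m j s x) t * φ x)
        = ∫ x : EuclideanSpace ℝ (Fin m),
            C * t * x j * (t ^ 2 + ‖x‖ ^ 2) ^ (-(((m:ℝ)+3)/2)) * φ x := by
      congr 1; funext x
      rw [deriv_poissonQ m j ht0 x]
    have hint1 : Integrable (fun y : EuclideanSpace ℝ (Fin m) =>
        k y * ((φ (t • y) - φ 0) / t)) :=
      hbound_int.mono' (hmeasG t) (MeasureTheory.ae_of_all _ fun y => by
        rw [Real.norm_eq_abs]; exact hboundG t ht y)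
    have hint2 : Integrable (fun y : EuclideanSpace ℝ (Fin m) => k y * (φ 0 / t)) :=
      (integrable_k j C).mul_const _
    rw [e1, scaling j C (⇑φ) ht0]
    have e3 : (∫ y : EuclideanSpace ℝ (Fin m),
        C * y j * (1 + ‖y‖ ^ 2) ^ (-(((m:ℝ)+3)/2)) * (φ (t • y) / t))
        = ∫ y : EuclideanSpace ℝ (Fin m),
            (k y * ((φ (t • y) - φ 0) / t) + k y * (φ 0 / t)) := by
      congr 1; funext y
      rw [hk]; ring
    rw [e3, MeasureTheory.integral_add hint1 hint2, MeasureTheory.integral_mul_const]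
    rw [show (∫ y : EuclideanSpace ℝ (Fin m), k y) = 0 from integral_k_zero j C]
    ring
  have hfinal := htendI.congr' (Filter.EventuallyEq.symm heq)
  rw [limit_value j φ] at hfinal
  exact hfinal
end
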